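/- arXiv:1904.04596 — 11 statements merged into one kernel-verified Lean document; each statement's English description precedes it below -/
import Mathlib

section
/- Let α ∈ ℂ and write x = |α|². Define c : ℕ × ℕ → ℂ by c(j,l) = (e^{-x/2}/(1+e^{-x})) · α^{j+l} · 2^{-(j+l)/2} · √(Nat.choose (j+l) j / (j+l)!) · (1+(-1)^l) when j+l is even, and c(j,l) = 0 when j+l is odd. Then (i) c(j,l) = 0 whenever j is odd or l is odd, and (ii) Σ_{(j,l)∈ℕ×ℕ} |c(j,l)|² = 1. (This is the statement that for the even-coherent NOON state with correlated inputs x = y, both parties detect an even photon number with probability 1, i.e. P(0,0|0,0) = P(0,0|1,1) = 1 in the two-way communication protocol.) -/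
/-!
For even indices `j = 2a`, `l = 2b` the output state factors as the product of two even cat
states of amplitude `α / √2`: since `exp (-x/2) / (1 + exp (-x)) = 1 / (2 cosh (x/2))` and
`C(2a+2b, 2a) / (2a+2b)! = 1 / ((2a)! (2b)!)`, one gets `|c(2a,2b)|² = p(a) p(b)` with
`p(a) = s^(2a) / (2a)! / cosh s`, `s = |α|²/2`, the photon-number distribution of such a cat
state, and `∑ p = 1` is the Taylor series of `cosh s`. Every other coefficient vanishes, either
by the parity of `j + l` or through the factor `1 + (-1)^l`.
-/

open scoped BigOperators

section

open Real Nat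

noncomputable def evenCatProb (s : ℝ) (n : ℕ) : ℝ :=
  s ^ (2 * n) / (2 * n)! / cosh s

lemma evenCatProb_nonneg (s : ℝ) (n : ℕ) : 0 ≤ evenCatProb s n := by
  unfold evenCatProb
  have := (even_two_mul n).pow_nonneg s
  positivity

lemma hasSum_evenCatProb (s : ℝ) : HasSum (evenCatProb s) 1 := by
  have h := (hasSum_cosh s).div_const (cosh s)
  rwa [div_self (cosh_pos s).ne'] at h

lemma hasSum_evenCatProb_mul_evenCatProb (s : ℝ) :
    HasSum (fun p : ℕ × ℕ => evenCatProb s p.1 * evenCatProb s p.2) 1 := by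
  have h := hasSum_evenCatProb s
  simpa using h.mul h <|
    h.summable.mul_of_nonneg h.summable (evenCatProb_nonneg s) (evenCatProb_nonneg s)

lemma exp_neg_half_div_one_add_exp_neg (x : ℝ) :
    exp (-x / 2) / (1 + exp (-x)) = (2 * cosh (x / 2))⁻¹ := by
  have h : exp (-x) = exp (-x / 2) * exp (-x / 2) := by rw [← exp_add]; ring_nf
  rw [cosh_eq, h, neg_div]
  field_simp
  rw [mul_add, sq, ← exp_add, ← exp_add, neg_add_cancel, exp_zero]

lemma sq_rpow_neg_div_two {r : ℝ} (hr : 0 ≤ r) (t : ℝ) : (r ^ (-t / 2)) ^ 2 = (r ^ t)⁻¹ := by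
  rw [← rpow_mul_natCast hr, ← rpow_neg hr]
  congr 1
  push_cast
  ring

lemma cast_choose_add_div_factorial (a b : ℕ) :
    ((a + b).choose a : ℝ) / (a + b)! = (a ! * b ! : ℝ)⁻¹ := by
  rw [cast_add_choose, div_div_cancel_left' (by positivity)]

noncomputable def noonCoeff (α : ℂ) (j l : ℕ) : ℂ :=
  ((exp (-‖α‖ ^ 2 / 2) / (1 + exp (-‖α‖ ^ 2)) : ℝ) : ℂ) * α ^ (j + l) *
    (((2 : ℝ) ^ (-((j + l : ℕ) : ℝ) / 2) : ℝ) : ℂ) *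
    ((√(((j + l).choose j : ℝ) / (j + l)!) : ℝ) : ℂ) * (1 + (-1) ^ l)

lemma noonCoeff_of_odd_right (α : ℂ) (j : ℕ) {l : ℕ} (hl : Odd l) : noonCoeff α j l = 0 := by
  simp [noonCoeff, hl.neg_one_pow]

lemma norm_noonCoeff_two_mul_sq (α : ℂ) (a b : ℕ) :
    ‖noonCoeff α (2 * a) (2 * b)‖ ^ 2 =
      evenCatProb (‖α‖ ^ 2 / 2) a * evenCatProb (‖α‖ ^ 2 / 2) b := by
  have hparity : (1 + (-1 : ℂ) ^ (2 * b)) = 2 := by norm_num [pow_mul]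
  simp only [noonCoeff, hparity, norm_mul, Complex.norm_real, norm_pow, Real.norm_eq_abs, mul_pow,
    sq_abs, exp_neg_half_div_one_add_exp_neg, sq_rpow_neg_div_two zero_le_two, Real.rpow_natCast,
    cast_choose_add_div_factorial, evenCatProb]
  rw [Real.sq_sqrt (by positivity), ← pow_mul, mul_comm (2 * a + 2 * b), pow_mul]
  simp only [div_pow, Complex.norm_two]
  field_simp
  ring

lemma hasSum_of_hasSum_two_mul_two_mul {M : Type*} [AddCommMonoid M] [TopologicalSpace M]
    {f : ℕ × ℕ → M} {a : M} (hf : ∀ j l, (Odd j ∨ Odd l) → f (j, l) = 0)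
    (h : HasSum (fun q : ℕ × ℕ => f (2 * q.1, 2 * q.2)) a) : HasSum f a := by
  have hinj : Function.Injective (Prod.map (2 * ·) (2 * ·) : ℕ × ℕ → ℕ × ℕ) :=
    (mul_right_injective₀ two_ne_zero).prodMap (mul_right_injective₀ two_ne_zero)
  refine (hinj.hasSum_iff ?_).1 h
  rintro ⟨j, l⟩ hjl
  refine hf j l ?_
  by_contra h
  simp only [not_or, Nat.not_odd_iff_even] at h
  obtain ⟨a, rfl⟩ := h.1.two_dvd
  obtain ⟨b, rfl⟩ := h.2.two_dvd
  exact hjl ⟨(a, b), rfl⟩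

end

/-- For the even-coherent NOON state with correlated inputs, the output Fock
coefficients vanish on odd photon numbers and the state is normalized:
both parties detect an even photon number with probability 1. -/
theorem even_coherent_NOON_correlated_parity
    (α : ℂ) (x : ℝ) (hx : x = ‖α‖ ^ 2)
    (c : ℕ × ℕ → ℂ)
    (hc_even : ∀ j l : ℕ, Even (j + l) →
      c (j, l) = ((Real.exp (-x / 2) / (1 + Real.exp (-x)) : ℝ) : ℂ) * α ^ (j + l) *
        (((2 : ℝ) ^ (-((j + l : ℕ) : ℝ) / 2) : ℝ) : ℂ) *
        ((Real.sqrt ((Nat.choose (j + l) j : ℝ) / (Nat.factorial (j + l) : ℝ)) : ℝ) : ℂ) *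
        (1 + (-1 : ℂ) ^ l))
    (hc_odd : ∀ j l : ℕ, Odd (j + l) → c (j, l) = 0) :
    (∀ j l : ℕ, (Odd j ∨ Odd l) → c (j, l) = 0) ∧
      ∑' p : ℕ × ℕ, ‖c p‖ ^ 2 = 1 := by
  subst hx
  replace hc_even : ∀ j l, Even (j + l) → c (j, l) = noonCoeff α j l := hc_even
  have parity : ∀ j l : ℕ, (Odd j ∨ Odd l) → c (j, l) = 0 := by
    intro j l hjl
    rcases Nat.even_or_odd (j + l) with he | ho
    · have hl : Odd l := by grind
      rw [hc_even j l he, noonCoeff_of_odd_right α j hl]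
    · exact hc_odd j l ho
  refine ⟨parity, HasSum.tsum_eq ?_⟩
  refine hasSum_of_hasSum_two_mul_two_mul (fun j l hjl => by simp [parity j l hjl]) ?_
  convert hasSum_evenCatProb_mul_evenCatProb (‖α‖ ^ 2 / 2) using 2 with q
  rw [hc_even _ _ ⟨q.1 + q.2, by ring⟩, norm_noonCoeff_two_mul_sq]
end

section
/- Let r ∈ ℝ. Define d : ℕ × ℕ → ℝ by d(2k, 2(m-k)) = (1/√(2(cosh r + 1))) · (-tanh r)^m · √((2m)!) · √(Nat.choose (2m) (2k)) / (2^{2m-1} · m!) for all m ∈ ℕ and 0 ≤ k ≤ m, and d(j,l) = 0 whenever j or l is odd. Then Σ_{(j,l)∈ℕ×ℕ} |d(j,l)|² = 1. (This is the statement that for the squeezed-vacuum NOON state with correlated inputs, both parties detect an even photon number with probability 1, i.e. P(0,0|0,0) = P(0,0|1,1) = 1 in the two-way communication protocol.) -/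
/-!
Only pairs of even photon numbers carry amplitude. Grouped by the number `m` of photon pairs, the
squared amplitudes are `2 / (cosh r + 1) * C(2m, m) * (tanh² r / 16) ^ m * C(2m, 2k)`, and the
even-index row sum `∑ₖ C(2m, 2k) = 2 ^ (2m - 1)` (for `m ≥ 1`) collapses group `m` to
`C(2m, m) * (tanh² r / 4) ^ m / (cosh r + 1)`, plus `1 / (cosh r + 1)` from the vacuum `m = 0`.
The generating function `∑ₘ C(2m, m) xᵐ = 1 / √(1 - 4x)`, an instance of the binomial series,
evaluates at `x = tanh² r / 4` to `cosh r`, so the total is `(cosh r + 1) / (cosh r + 1) = 1`.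
-/

open Finset Nat Real

theorem Nat.cast_centralBinom {K : Type*} [Field K] [CharZero K] (n : ℕ) :
    (centralBinom n : K) = (2 * n)! / n ! ^ 2 := by
  rw [centralBinom_eq_two_mul_choose, Nat.cast_choose K (by omega), show 2 * n - n = n by omega,
    sq]

theorem ascPochhammer_eval_one_half {K : Type*} [Field K] [CharZero K] (n : ℕ) :
    (ascPochhammer K n).eval (1 / 2 : K) = (2 * n)! / (4 ^ n * n !) := by
  induction n with
  | zero => simp
  | succ n ih =>
    rw [ascPochhammer_succ_eval, ih, Nat.mul_succ, Nat.factorial_succ, Nat.factorial_succ,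
      Nat.factorial_succ]
    push_cast
    field_simp
    ring

theorem Ring.choose_add_one_half_sub_one {K : Type*} [Field K] [CharZero K] (n : ℕ) :
    Ring.choose (1 / 2 + n - 1 : K) n = centralBinom n / 4 ^ n := by
  rw [Ring.choose_eq_smul, Polynomial.descPochhammer_smeval_eq_ascPochhammer,
    Polynomial.ascPochhammer_smeval_eq_eval, show (1 / 2 + n - 1 - n + 1 : K) = 1 / 2 by ring,
    ascPochhammer_eval_one_half, Nat.cast_centralBinom, smul_eq_mul]
  field_simp

theorem hasSum_centralBinom_mul_pow {x : ℝ} (hx : |x| < 1 / 4) :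
    HasSum (fun n => (centralBinom n : ℝ) * x ^ n) (1 / √(1 - 4 * x)) := by
  have h4x : 4 * x ∈ Metric.eball (0 : ℝ) 1 := by
    rw [mem_eball_zero_iff, ← ofReal_norm, ENNReal.ofReal_lt_one, Real.norm_eq_abs, abs_mul]
    norm_num
    linarith
  have h := (one_div_one_sub_rpow_hasFPowerSeriesOnBall_zero (1 / 2)).hasSum h4x
  simp only [FormalMultilinearSeries.ofScalars_apply_eq, Ring.choose_add_one_half_sub_one,
    zero_add, smul_eq_mul] at h
  rw [sqrt_eq_rpow]
  refine h.congr_fun fun n => ?_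
  rw [mul_pow]
  field_simp

theorem Finset.sum_range_two_mul {M : Type*} [AddCommMonoid M] (f : ℕ → M) (n : ℕ) :
    ∑ i ∈ range (2 * n), f i = ∑ k ∈ range n, (f (2 * k) + f (2 * k + 1)) := by
  induction n with
  | zero => simp
  | succ n ih => rw [Nat.mul_succ, sum_range_succ, sum_range_succ, sum_range_succ, ih, add_assoc]

theorem Nat.two_mul_sum_range_choose_two_mul (n : ℕ) :
    2 * ∑ k ∈ range (n + 1), (2 * n).choose (2 * k) = 4 ^ n + if n = 0 then 1 else 0 := by
  rcases n with _ | n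
  · simp
  -- Pascal's rule pairs the even entries of row `2n + 2` with consecutive entries of row `2n + 1`.
  have hpascal : ∑ k ∈ range (n + 2), (2 * (n + 1)).choose (2 * k) =
      ∑ j ∈ range (2 * n + 2 + 1), (2 * n + 1).choose j := by
    rw [sum_range_succ', sum_range_succ' (fun j => (2 * n + 1).choose j), ← Nat.mul_succ,
      sum_range_two_mul]
    refine congrArg₂ _ (sum_congr rfl fun k _ => ?_) (by simp)
    rw [show 2 * (n + 1) = 2 * n + 1 + 1 by ring, show 2 * (k + 1) = 2 * k + 1 + 1 by ring,
      Nat.choose_succ_succ']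
  rw [hpascal, sum_range_succ, Nat.sum_range_choose, Nat.choose_succ_self, if_neg n.succ_ne_zero,
    pow_succ, pow_mul]
  ring

theorem HasSum.of_sum_antidiagonal_of_nonneg {A : Type*} [AddMonoid A] [HasAntidiagonal A]
    {f : A × A → ℝ} {a : ℝ} (hf : 0 ≤ f)
    (h : HasSum (fun n => ∑ kl ∈ antidiagonal n, f kl) a) : HasSum f a := by
  let e := HasAntidiagonal.sigmaAntidiagonalEquivProd (A := A)
  have hfiber (n : A) : HasSum (fun kl : antidiagonal n => f kl) (∑ kl ∈ antidiagonal n, f kl) :=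
    Finset.hasSum _ f
  have hsum : Summable (f ∘ e) :=
    (summable_sigma_of_nonneg fun _ => hf _).2
      ⟨fun n => (hfiber n).summable, h.summable.congr fun n => (hfiber n).tsum_eq.symm⟩
  rw [← e.hasSum_iff, h.unique (hsum.hasSum.sigma hfiber)]
  exact hsum.hasSum

/-- The amplitude `d(2k, 2(m - k))` of the output state. -/
noncomputable def squeezedNOONCoeff (r : ℝ) (m k : ℕ) : ℝ :=
  (1 / √(2 * (cosh r + 1))) * (-tanh r) ^ m * √((2 * m)! : ℝ) * √((2 * m).choose (2 * k) : ℝ) /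
    ((2 : ℝ) ^ (2 * (m : ℤ) - 1) * (m ! : ℝ))

theorem squeezedNOONCoeff_sq (r : ℝ) (m k : ℕ) :
    squeezedNOONCoeff r m k ^ 2 =
      2 / (cosh r + 1) * centralBinom m * (tanh r ^ 2 / 16) ^ m * (2 * m).choose (2 * k) := by
  have htwo : (2 : ℝ) ^ (2 * (m : ℤ) - 1) = 4 ^ m / 2 := by
    rw [zpow_sub₀ two_ne_zero, zpow_one, zpow_mul, zpow_natCast]
    norm_num
  have hsixteen : (16 : ℝ) ^ m = (4 ^ m) ^ 2 := by
    rw [← pow_mul, pow_mul']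
    norm_num
  rw [squeezedNOONCoeff, htwo, Nat.cast_centralBinom, div_pow, mul_pow, mul_pow, mul_pow, div_pow,
    one_pow, sq_sqrt (by positivity), sq_sqrt (by positivity), sq_sqrt (by positivity), ← pow_mul,
    mul_comm m 2, pow_mul, neg_sq, div_pow, ← pow_mul, hsixteen]
  field_simp

theorem sum_range_squeezedNOONCoeff_sq (r : ℝ) (m : ℕ) :
    ∑ k ∈ range (m + 1), squeezedNOONCoeff r m k ^ 2 =
      (centralBinom m * (tanh r ^ 2 / 4) ^ m + if m = 0 then 1 else 0) / (cosh r + 1) := by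
  have heven : 2 * ∑ k ∈ range (m + 1), ((2 * m).choose (2 * k) : ℝ) =
      4 ^ m + if m = 0 then 1 else 0 := by
    exact_mod_cast Nat.two_mul_sum_range_choose_two_mul m
  simp_rw [squeezedNOONCoeff_sq, ← mul_sum]
  rw [mul_comm _ (∑ k ∈ _, _), ← mul_assoc, ← mul_assoc, mul_comm _ (2 / _), div_mul_eq_mul_div,
    heven]
  split_ifs with hm
  · simp [hm]
  · have hsixteen : (16 : ℝ) ^ m = 4 ^ m * 4 ^ m := by
      rw [← mul_pow]
      norm_num
    rw [add_zero, add_zero, div_pow, div_pow, hsixteen]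
    field_simp

theorem hasSum_sum_range_squeezedNOONCoeff_sq (r : ℝ) :
    HasSum (fun m => ∑ k ∈ range (m + 1), squeezedNOONCoeff r m k ^ 2) 1 := by
  simp_rw [sum_range_squeezedNOONCoeff_sq]
  have hx : |tanh r ^ 2 / 4| < 1 / 4 := by
    rw [abs_of_nonneg (by positivity)]
    nlinarith [abs_tanh_lt_one r, sq_abs (tanh r), abs_nonneg (tanh r)]
  have hcentral := hasSum_centralBinom_mul_pow hx
  rw [show 1 - 4 * (tanh r ^ 2 / 4) = 1 - tanh r ^ 2 by ring,
    ← cosh_artanh ⟨neg_one_lt_tanh r, tanh_lt_one r⟩, artanh_tanh] at hcentral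
  have := (hcentral.add (hasSum_ite_eq 0 1)).div_const (cosh r + 1)
  rwa [div_self (by positivity)] at this

/-- For the squeezed-vacuum NOON state with correlated inputs, both parties
detect an even photon number with probability 1: the output coefficients,
supported on pairs of even photon numbers, are normalized. -/
theorem squeezed_NOON_correlated_parity
    (r : ℝ) (d : ℕ × ℕ → ℝ)
    (hd : ∀ m k : ℕ, k ≤ m →
      d (2 * k, 2 * (m - k)) =
        (1 / Real.sqrt (2 * (Real.cosh r + 1))) * (-Real.tanh r) ^ m *
          Real.sqrt (Nat.factorial (2 * m) : ℝ) *
          Real.sqrt (Nat.choose (2 * m) (2 * k) : ℝ) /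
          ((2 : ℝ) ^ (2 * (m : ℤ) - 1) * (Nat.factorial m : ℝ)))
    (hd_odd : ∀ j l : ℕ, Odd j ∨ Odd l → d (j, l) = 0) :
    ∑' p : ℕ × ℕ, |d p| ^ 2 = 1 := by
  let double : ℕ × ℕ → ℕ × ℕ := fun q => (2 * q.1, 2 * q.2)
  have hdouble : Function.Injective double := fun q q' h => by
    simp only [double, Prod.ext_iff] at h ⊢
    omega
  have hsupport : ∀ p ∉ Set.range double, |d p| ^ 2 = 0 := by
    rintro ⟨j, l⟩ hp
    have hodd : Odd j ∨ Odd l := by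
      contrapose! hp
      obtain ⟨⟨a, rfl⟩, ⟨b, rfl⟩⟩ := And.imp Nat.not_odd_iff_even.mp Nat.not_odd_iff_even.mp hp
      exact ⟨(a, b), by simp [double, two_mul]⟩
    simp [hd_odd j l hodd]
  have hdiag (m : ℕ) : ∑ kl ∈ antidiagonal m, |d (double kl)| ^ 2 =
      ∑ k ∈ range (m + 1), squeezedNOONCoeff r m k ^ 2 := by
    rw [Nat.sum_antidiagonal_eq_sum_range_succ_mk]
    exact sum_congr rfl fun k hk => by
      rw [sq_abs, hd m k (Nat.lt_succ_iff.mp (mem_range.mp hk)), squeezedNOONCoeff]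
  refine ((hdouble.hasSum_iff hsupport).mp ?_).tsum_eq
  refine HasSum.of_sum_antidiagonal_of_nonneg (fun _ => sq_nonneg _) ?_
  simpa only [Function.comp_apply, hdiag] using hasSum_sum_range_squeezedNOONCoeff_sq r
end

section
/- Let α ∈ ℂ. Define c, c' : ℕ × ℕ → ℂ by c(j,l) = α^{j+l} · 2^{-(j+l)/2} · √(Nat.choose (j+l) j / (j+l)!) · (1+(-1)^l) and c'(j,l) = α^{j+l} · 2^{-(j+l)/2} · √(Nat.choose (j+l) j / (j+l)!) · (1-(-1)^l). Then there exist functions f, g, g' : ℕ → ℂ, explicitly f(j) = (α/√2)^j/√(j!), g(l) = (α/√2)^l (1+(-1)^l)/√(l!), g'(l) = (α/√2)^l (1-(-1)^l)/√(l!), such that c(j,l) = f(j)·g(l) and c'(j,l) = f(j)·g'(l) for all (j,l) ∈ ℕ × ℕ. In particular, both output states are product states with the same Alice-mode factor f, so Alice's reduced statistics are identical for correlated and anti-correlated inputs. (Hence the coherent NOON state (|α⟩|0⟩+|0⟩|α⟩)/√𝒩' furnishes no violation of the GYNI inequality in the protocol.) -/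
/-!
Since `2 ^ (-(j + l) / 2) = (√2)⁻¹ ^ j * (√2)⁻¹ ^ l` and `C(j + l, j) / (j + l)! = 1 / (j! l!)`,
every factor of the output amplitude splits into a part depending on `j` alone and a part
depending on `l` alone; the parity factor `1 ± (-1) ^ l` only involves Bob's mode.
-/

open Nat

lemma Real.rpow_neg_natCast_div_two {x : ℝ} (hx : 0 ≤ x) (n : ℕ) :
    x ^ (-(n : ℝ) / 2) = (√x)⁻¹ ^ n := by
  rw [Real.sqrt_eq_rpow, ← Real.rpow_neg hx, ← Real.rpow_natCast, ← Real.rpow_mul hx]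
  ring_nf

lemma Real.sqrt_add_choose_div_factorial (j l : ℕ) :
    √(((j + l).choose j : ℝ) / (j + l)!) = (√(j ! : ℝ))⁻¹ * (√(l ! : ℝ))⁻¹ := by
  have hfac : ((j + l)! : ℝ) ≠ 0 := by positivity
  rw [Nat.cast_add_choose, div_div_cancel_left' hfac, Real.sqrt_inv, Real.sqrt_mul (by positivity),
    mul_inv]

lemma coherentNOON_amplitude_eq_mul (α s : ℂ) (j l : ℕ) :
    α ^ (j + l) * (((2 : ℝ) ^ (-((j + l : ℕ) : ℝ) / 2) : ℝ) : ℂ) *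
        ((√(((j + l).choose j : ℝ) / (j + l)!) : ℝ) : ℂ) * s =
      (α / (√2 : ℝ)) ^ j / ((√(j ! : ℝ) : ℝ) : ℂ) *
        ((α / (√2 : ℝ)) ^ l * s / ((√(l ! : ℝ) : ℝ) : ℂ)) := by
  rw [Real.rpow_neg_natCast_div_two zero_le_two, Real.sqrt_add_choose_div_factorial]
  push_cast
  ring

/-- For the coherent NOON state, the beam-splitter output coefficients for
correlated and anti-correlated inputs factorize into product states with the
same Alice-mode factor, so Alice's reduced statistics are identical and no
GYNI violation is possible. -/
theorem coherent_NOON_output_is_product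
    (α : ℂ) (c c' : ℕ × ℕ → ℂ)
    (hc : ∀ j l : ℕ,
      c (j, l) = α ^ (j + l) * (((2 : ℝ) ^ (-((j + l : ℕ) : ℝ) / 2) : ℝ) : ℂ) *
        ((Real.sqrt ((Nat.choose (j + l) j : ℝ) / (Nat.factorial (j + l) : ℝ)) : ℝ) : ℂ) *
        (1 + (-1 : ℂ) ^ l))
    (hc' : ∀ j l : ℕ,
      c' (j, l) = α ^ (j + l) * (((2 : ℝ) ^ (-((j + l : ℕ) : ℝ) / 2) : ℝ) : ℂ) *
        ((Real.sqrt ((Nat.choose (j + l) j : ℝ) / (Nat.factorial (j + l) : ℝ)) : ℝ) : ℂ) *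
        (1 - (-1 : ℂ) ^ l)) :
    ∃ f g g' : ℕ → ℂ,
      (∀ j : ℕ, f j = (α / (Real.sqrt 2 : ℂ)) ^ j / ((Real.sqrt (Nat.factorial j) : ℝ) : ℂ)) ∧
      (∀ l : ℕ, g l = (α / (Real.sqrt 2 : ℂ)) ^ l * (1 + (-1 : ℂ) ^ l) /
        ((Real.sqrt (Nat.factorial l) : ℝ) : ℂ)) ∧
      (∀ l : ℕ, g' l = (α / (Real.sqrt 2 : ℂ)) ^ l * (1 - (-1 : ℂ) ^ l) /
        ((Real.sqrt (Nat.factorial l) : ℝ) : ℂ)) ∧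
      (∀ j l : ℕ, c (j, l) = f j * g l ∧ c' (j, l) = f j * g' l) :=
  ⟨_, _, _, fun _ => rfl, fun _ => rfl, fun _ => rfl, fun j l =>
    ⟨(hc j l).trans (coherentNOON_amplitude_eq_mul α _ j l),
      (hc' j l).trans (coherentNOON_amplitude_eq_mul α _ j l)⟩⟩
end

section
/- For all functions f : Bool → Bool and g : Bool → Bool → Bool, the number of pairs (x,y) ∈ Bool × Bool satisfying both f x = xor x y and g x y = xor x y is at most 2; likewise, for all f' : Bool → Bool → Bool and g' : Bool → Bool, the number of pairs (x,y) satisfying both f' x y = xor x y and g' y = xor x y is at most 2. Consequently, every deterministic one-way-signaling strategy (in either causal order A≺B or B≺A) achieves GYNI value 𝒥 = (1/4)·#{(x,y) : a(x,y) = x⊕y and b(x,y) = x⊕y} ≤ 1/2. -/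
open scoped BigOperators

lemma gyni_aux1 : (∀ (f : Bool → Bool) (g : Bool → Bool → Bool),
      (Finset.univ.filter
        (fun p : Bool × Bool => f p.1 = xor p.1 p.2 ∧ g p.1 p.2 = xor p.1 p.2)).card ≤ 2) := by
  decide

lemma gyni_aux2 : (∀ (f' : Bool → Bool → Bool) (g' : Bool → Bool),
      (Finset.univ.filter
        (fun p : Bool × Bool => f' p.1 p.2 = xor p.1 p.2 ∧ g' p.2 = xor p.1 p.2)).card ≤ 2) := by
  decide

/-- In the GYNI game, any deterministic strategy respecting one-way signaling
(in either causal order) wins on at most 2 of the 4 input pairs, so the GYNI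
value `𝒥 = (1/4)·#wins` is at most `1/2`. -/
theorem gyni_one_way_signaling_bound :
    (∀ (f : Bool → Bool) (g : Bool → Bool → Bool),
      (Finset.univ.filter
        (fun p : Bool × Bool => f p.1 = xor p.1 p.2 ∧ g p.1 p.2 = xor p.1 p.2)).card ≤ 2) ∧
    (∀ (f' : Bool → Bool → Bool) (g' : Bool → Bool),
      (Finset.univ.filter
        (fun p : Bool × Bool => f' p.1 p.2 = xor p.1 p.2 ∧ g' p.2 = xor p.1 p.2)).card ≤ 2) ∧
    (∀ (a b : Bool → Bool → Bool),
      ((∀ x y y' : Bool, a x y = a x y') ∨ (∀ x x' y : Bool, b x y = b x' y)) →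
      (1 / 4 : ℝ) * (Finset.univ.filter
        (fun p : Bool × Bool => a p.1 p.2 = xor p.1 p.2 ∧ b p.1 p.2 = xor p.1 p.2)).card
        ≤ 1 / 2) := by
  refine ⟨gyni_aux1, gyni_aux2, ?_⟩
  intro a b h
  have hcard : (Finset.univ.filter
      (fun p : Bool × Bool => a p.1 p.2 = xor p.1 p.2 ∧ b p.1 p.2 = xor p.1 p.2)).card ≤ 2 := by
    rcases h with h | h
    · have := gyni_aux1 (fun x => a x true) b
      have hset : (Finset.univ.filter
          (fun p : Bool × Bool => a p.1 p.2 = xor p.1 p.2 ∧ b p.1 p.2 = xor p.1 p.2)) =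
          (Finset.univ.filter
          (fun p : Bool × Bool => a p.1 true = xor p.1 p.2 ∧ b p.1 p.2 = xor p.1 p.2)) := by
        apply Finset.filter_congr
        intro p _
        rw [h p.1 p.2 true]
      rw [hset]; exact this
    · have := gyni_aux2 a (fun y => b true y)
      have hset : (Finset.univ.filter
          (fun p : Bool × Bool => a p.1 p.2 = xor p.1 p.2 ∧ b p.1 p.2 = xor p.1 p.2)) =
          (Finset.univ.filter
          (fun p : Bool × Bool => a p.1 p.2 = xor p.1 p.2 ∧ b true p.2 = xor p.1 p.2)) := by
        apply Finset.filter_congr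
        intro p _
        rw [h p.1 true p.2]
      rw [hset]; exact this
  have : ((Finset.univ.filter
      (fun p : Bool × Bool => a p.1 p.2 = xor p.1 p.2 ∧ b p.1 p.2 = xor p.1 p.2)).card : ℝ) ≤ 2 := by
    exact_mod_cast hcard
  linarith
end

section
/- Let λ : ℕ → ℂ satisfy Σ_{n=0}^∞ |λ_n|² = 1. Then Σ_{n=0}^∞ Σ_{k=0}^∞ |λ_{n+2k}|² · 2^{-(n+2k)} · Nat.choose (n+2k) (2k) = (1 + |λ_0|²)/2. -/
open scoped BigOperators ENNReal

/-!
Substituting `m = n + 2k` turns the double sum into `∑ₘ |λₘ|² 2⁻ᵐ ∑ₖ C(m, 2k)`. The inner sum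
is `2ᵐ⁻¹` for `m ≥ 1` and `1` for `m = 0`, so the total is `(∑ₘ |λₘ|² + |λ₀|²) / 2`. In `ℝ≥0∞`
the substitution and the interchange of summations need no summability bookkeeping.
-/

theorem tsum_nat_add_eq_tsum_of_eq_zero {M : Type*} [AddCommMonoid M] [TopologicalSpace M]
    {f : ℕ → M} {j : ℕ} (hf : ∀ m < j, f m = 0) : ∑' n, f (n + j) = ∑' m, f m := by
  refine (add_left_injective j).tsum_eq fun m hm => ⟨m - j, Nat.sub_add_cancel ?_⟩
  exact not_lt.1 fun hlt => hm (hf m hlt)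

namespace ENNReal

theorem tsum_tsum_toReal {α β : Type*} {f : α → β → ℝ≥0∞} (hf : ∑' a, ∑' b, f a b ≠ ∞) :
    ∑' a, ∑' b, (f a b).toReal = (∑' a, ∑' b, f a b).toReal := by
  have hinner := ENNReal.ne_top_of_tsum_ne_top hf
  rw [ENNReal.tsum_toReal_eq hinner]
  exact tsum_congr fun a =>
    (ENNReal.tsum_toReal_eq (ENNReal.ne_top_of_tsum_ne_top (hinner a))).symm

theorem tsum_choose (n : ℕ) : ∑' j, (n.choose j : ℝ≥0∞) = 2 ^ n := by
  rw [tsum_eq_sum (s := Finset.range (n + 1)) fun j hj =>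
    by rw [Nat.choose_eq_zero_of_lt (by simpa using hj), Nat.cast_zero]]
  exact_mod_cast Nat.sum_range_choose n

/-- Pascal's rule splits each even-indexed entry of row `n + 1` into two consecutive entries
of row `n`. -/
theorem tsum_choose_two_mul (n : ℕ) : ∑' k, ((n + 1).choose (2 * k) : ℝ≥0∞) = 2 ^ n := by
  have hpascal (k : ℕ) : ((n + 1).choose (2 * (k + 1)) : ℝ≥0∞) =
      n.choose (2 * k + 1) + n.choose (2 * (k + 1)) := by
    rw [mul_add, mul_one, Nat.choose_succ_succ', Nat.cast_add]
  calc ∑' k, ((n + 1).choose (2 * k) : ℝ≥0∞)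
      = 1 + ∑' k, ((n + 1).choose (2 * (k + 1)) : ℝ≥0∞) := by
        rw [tsum_eq_zero_add' ENNReal.summable, mul_zero, Nat.choose_zero_right, Nat.cast_one]
    _ = (1 + ∑' k, (n.choose (2 * (k + 1)) : ℝ≥0∞)) + ∑' k, (n.choose (2 * k + 1) : ℝ≥0∞) := by
        simp only [hpascal, ENNReal.tsum_add]
        ring
    _ = ∑' k, (n.choose (2 * k) : ℝ≥0∞) + ∑' k, (n.choose (2 * k + 1) : ℝ≥0∞) := by
        rw [tsum_eq_zero_add' (f := fun k => (n.choose (2 * k) : ℝ≥0∞)) ENNReal.summable,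
          mul_zero, Nat.choose_zero_right, Nat.cast_one]
    _ = 2 ^ n := by
        rw [tsum_even_add_odd (f := fun j => (n.choose j : ℝ≥0∞)) ENNReal.summable
          ENNReal.summable, tsum_choose]

theorem inv_two_pow_succ_mul_two_pow (n : ℕ) : ((2 : ℝ≥0∞) ^ (n + 1))⁻¹ * 2 ^ n = 2⁻¹ := by
  rw [pow_succ, ENNReal.mul_inv (by simp) (by simp), mul_right_comm,
    ENNReal.inv_mul_cancel (by simp) (by simp), one_mul]

theorem tsum_tsum_mul_choose_two_mul (A : ℕ → ℝ≥0∞) :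
    ∑' n, ∑' k, A (n + 2 * k) * ((2 : ℝ≥0∞) ^ (n + 2 * k))⁻¹ * (n + 2 * k).choose (2 * k) =
      (∑' m, A m) / 2 + A 0 / 2 := by
  set w : ℕ → ℕ → ℝ≥0∞ := fun m k => A m * ((2 : ℝ≥0∞) ^ m)⁻¹ * m.choose (2 * k)
  calc ∑' n, ∑' k, w (n + 2 * k) k
      = ∑' m, ∑' k, w m k := by
        rw [ENNReal.tsum_comm, ENNReal.tsum_comm (f := w)]
        exact tsum_congr fun k => tsum_nat_add_eq_tsum_of_eq_zero (f := (w · k)) fun m hm => by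
          simp only [w, Nat.choose_eq_zero_of_lt hm, Nat.cast_zero, mul_zero]
    _ = ∑' m, A m * ((2 : ℝ≥0∞) ^ m)⁻¹ * ∑' k, (m.choose (2 * k) : ℝ≥0∞) := by
        simp only [w, ENNReal.tsum_mul_left]
    _ = A 0 + ∑' n, A (n + 1) * 2⁻¹ := by
        have hrow_zero : ∑' k, (Nat.choose 0 (2 * k) : ℝ≥0∞) = 1 := by
          rw [tsum_eq_single 0 fun k hk => by
            rw [Nat.choose_eq_zero_of_lt (by omega), Nat.cast_zero]]
          simp
        rw [tsum_eq_zero_add' ENNReal.summable]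
        simp only [hrow_zero, tsum_choose_two_mul, mul_assoc, inv_two_pow_succ_mul_two_pow,
          pow_zero, inv_one, mul_one]
    _ = (∑' m, A m) / 2 + A 0 / 2 := by
        rw [ENNReal.tsum_mul_right, tsum_eq_zero_add' (f := A) ENNReal.summable, ENNReal.add_div,
          add_right_comm, ENNReal.add_halves, div_eq_mul_inv]

end ENNReal

/-- For a normalized sequence `λ`, the probability that Bob's mode has even
photon number after the beam splitter (correlated inputs) is determined by
this double-sum identity: it equals `(1 + |λ₀|²)/2`. -/
theorem generalized_NOON_even_parity_sum
    (lam : ℕ → ℂ) (h : ∑' n : ℕ, ‖lam n‖ ^ 2 = 1) :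
    ∑' n : ℕ, ∑' k : ℕ,
      ‖lam (n + 2 * k)‖ ^ 2 * ((2 : ℝ) ^ (n + 2 * k))⁻¹ *
        (Nat.choose (n + 2 * k) (2 * k) : ℝ)
      = (1 + ‖lam 0‖ ^ 2) / 2 := by
  set A : ℕ → ℝ≥0∞ := fun n => ‖lam n‖ₑ ^ 2
  have hA_toReal (n : ℕ) : (A n).toReal = ‖lam n‖ ^ 2 := by simp [A, ENNReal.toReal_pow]
  have hA_ne_top (n : ℕ) : A n ≠ ∞ := by simp [A]
  have hA_sum : ∑' n, A n = 1 := by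
    rw [← ENNReal.toReal_eq_one_iff, ENNReal.tsum_toReal_eq hA_ne_top]
    simpa only [hA_toReal] using h
  have hA0_half_ne_top : A 0 / 2 ≠ ∞ := ENNReal.div_ne_top (hA_ne_top 0) two_ne_zero
  have hsum := ENNReal.tsum_tsum_mul_choose_two_mul A
  rw [hA_sum] at hsum
  calc _ = ∑' n, ∑' k,
        (A (n + 2 * k) * ((2 : ℝ≥0∞) ^ (n + 2 * k))⁻¹ * (n + 2 * k).choose (2 * k)).toReal := by
        simp only [ENNReal.toReal_mul, hA_toReal, ENNReal.toReal_inv, ENNReal.toReal_pow,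
          ENNReal.toReal_ofNat, ENNReal.toReal_natCast]
    _ = (1 / 2 + A 0 / 2).toReal := by
        rw [ENNReal.tsum_tsum_toReal (hsum ▸ ENNReal.add_ne_top.2 ⟨by simp, hA0_half_ne_top⟩), hsum]
    _ = (1 + ‖lam 0‖ ^ 2) / 2 := by
        rw [ENNReal.toReal_add (by simp) hA0_half_ne_top, ENNReal.toReal_div, ENNReal.toReal_div,
          hA_toReal]
        simp only [ENNReal.toReal_one, ENNReal.toReal_ofNat]
        ring
end

section
/- Let μ ∈ ℂ and let λ : ℕ → ℂ be the coherent-state coefficient sequence λ_n = e^{-|μ|²/2} μ^n/√(n!). For each k ∈ ℕ define η̃_k : ℕ → ℂ by η̃_k(n) = λ_{n+k} · 2^{-(n+k)/2} · (Nat.choose (n+k) k)^{1/2}. If η : ℕ → ℂ is square-summable (Σ_n |η_n|² < ∞) and Σ_n conj(η_n)·η̃_0(n) = 0, then Σ_n conj(η_n)·η̃_k(n) = 0 for every k ∈ ℕ. (Necessity direction of Theorem 1: when the embedded single-mode state is a coherent state, any projector orthogonal to the even-annihilated vectors is automatically orthogonal to the odd ones, so no GYNI violation is possible.) -/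
/-! The coherent-state coefficients satisfy `η̃_k = c_k • η̃_0` with
`c_k = μ^k 2^{-k/2} / √(k!)`, because `√C(n+k,k) / √((n+k)!) = 1 / (√(k!) √(n!))`; hence
orthogonality to `η̃_0` passes to every `η̃_k`. -/

theorem Real.sqrt_factorial_add (n k : ℕ) :
    √((n + k).factorial : ℝ) = √((n + k).choose k : ℝ) * √(k.factorial : ℝ) *
      √(n.factorial : ℝ) := by
  rw [← Real.sqrt_mul (by positivity), ← Real.sqrt_mul (by positivity)]
  congr 1
  have h := Nat.choose_mul_factorial_mul_factorial (Nat.le_add_left k n)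
  rw [Nat.add_sub_cancel] at h
  rw [← h]
  push_cast
  ring

theorem Complex.pow_div_sqrt_factorial_add_mul_sqrt_choose (μ : ℂ) (n k : ℕ) :
    μ ^ (n + k) / (√((n + k).factorial : ℝ) : ℂ) * (√((n + k).choose k : ℝ) : ℂ) =
      μ ^ k / (√(k.factorial : ℝ) : ℂ) * (μ ^ n / (√(n.factorial : ℝ) : ℂ)) := by
  have hn : (√(n.factorial : ℝ) : ℂ) ≠ 0 := by norm_cast; positivity
  have hk : (√(k.factorial : ℝ) : ℂ) ≠ 0 := by norm_cast; positivity
  have hc : (√((n + k).choose k : ℝ) : ℂ) ≠ 0 := by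
    have := Nat.choose_pos (Nat.le_add_left k n)
    norm_cast; positivity
  rw [Real.sqrt_factorial_add]
  push_cast
  field_simp
  ring

theorem Real.rpow_neg_natCast_add_div_two {x : ℝ} (hx : 0 < x) (n k : ℕ) :
    x ^ (-((n + k : ℕ) : ℝ) / 2) = x ^ (-(n : ℝ) / 2) * x ^ (-(k : ℝ) / 2) := by
  rw [← Real.rpow_add hx]
  push_cast
  ring_nf

theorem coherent_state_orthogonality_propagates_general
    (μ : ℂ) (lam : ℕ → ℂ)
    (hlam : ∀ n : ℕ, lam n =
      ((Real.exp (-(‖μ‖ ^ 2) / 2) : ℝ) : ℂ) * μ ^ n /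
        ((Real.sqrt (Nat.factorial n) : ℝ) : ℂ))
    (eta : ℕ → ℕ → ℂ)
    (heta : ∀ k n : ℕ, eta k n = lam (n + k) *
      (((2 : ℝ) ^ (-((n + k : ℕ) : ℝ) / 2) : ℝ) : ℂ) *
      ((Real.sqrt (Nat.choose (n + k) k : ℝ) : ℝ) : ℂ))
    (η : ℕ → ℂ)
    (horth : ∑' n : ℕ, (starRingEnd ℂ) (η n) * eta 0 n = 0) :
    ∀ k : ℕ, ∑' n : ℕ, (starRingEnd ℂ) (η n) * eta k n = 0 := by
  intro k
  set c : ℂ := μ ^ k / (√(k.factorial : ℝ) : ℂ) * (((2 : ℝ) ^ (-(k : ℝ) / 2) : ℝ) : ℂ)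
  have heta_eq : ∀ n, eta k n = c * eta 0 n := by
    intro n
    have hshift := Complex.pow_div_sqrt_factorial_add_mul_sqrt_choose μ n k
    simp only [heta, hlam, Real.rpow_neg_natCast_add_div_two two_pos n k, c,
      Nat.add_zero, Nat.choose_zero_right, Nat.cast_one, Real.sqrt_one, Complex.ofReal_one,
      mul_one, Complex.ofReal_mul]
    linear_combination
      ((Real.exp (-(‖μ‖ ^ 2) / 2) : ℝ) : ℂ) * ((2 : ℝ) ^ (-(n : ℝ) / 2) : ℝ) *
        ((2 : ℝ) ^ (-(k : ℝ) / 2) : ℝ) * hshift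
  calc ∑' n, (starRingEnd ℂ) (η n) * eta k n
      = ∑' n, c * ((starRingEnd ℂ) (η n) * eta 0 n) := by
        simp only [heta_eq, mul_left_comm]
    _ = 0 := by rw [tsum_mul_left, horth, mul_zero]

/-- Necessity direction of Theorem 1: when the embedded single-mode state is a
coherent state, any square-summable vector orthogonal to `η̃_0` is orthogonal
to every `η̃_k`, so no GYNI violation is possible. -/
theorem coherent_state_orthogonality_propagates
    (μ : ℂ) (lam : ℕ → ℂ)
    (hlam : ∀ n : ℕ, lam n =
      ((Real.exp (-(‖μ‖ ^ 2) / 2) : ℝ) : ℂ) * μ ^ n /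
        ((Real.sqrt (Nat.factorial n) : ℝ) : ℂ))
    (eta : ℕ → ℕ → ℂ)
    (heta : ∀ k n : ℕ, eta k n = lam (n + k) *
      (((2 : ℝ) ^ (-((n + k : ℕ) : ℝ) / 2) : ℝ) : ℂ) *
      ((Real.sqrt (Nat.choose (n + k) k : ℝ) : ℝ) : ℂ))
    (η : ℕ → ℂ) (hη : Summable (fun n : ℕ => ‖η n‖ ^ 2))
    (horth : ∑' n : ℕ, (starRingEnd ℂ) (η n) * eta 0 n = 0) :
    ∀ k : ℕ, ∑' n : ℕ, (starRingEnd ℂ) (η n) * eta k n = 0 :=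
  coherent_state_orthogonality_propagates_general μ lam hlam eta heta η horth
end

section
/- Let λ : ℕ → ℂ have finite support, satisfy Σ_n |λ_n|² = 1, and satisfy λ_m ≠ 0 for some m ≥ 1 (i.e. |ξ⟩ = Σ_n λ_n|n⟩ is a finite superposition of Fock states other than a multiple of the vacuum, hence a non-classical state). For each k ∈ ℕ define η̃_k : ℕ → ℂ by η̃_k(n) = λ_{n+k} · 2^{-(n+k)/2} · (Nat.choose (n+k) k)^{1/2}. Then there exists η : ℕ → ℂ with Σ_n |η_n|² = 1 such that Σ_n conj(η_n)·η̃_{2k}(n) = 0 for all k ∈ ℕ, while Σ_{k=0}^∞ |Σ_n conj(η_n)·η̃_{2k+1}(n)|² > 0. (This is the core of the paper's Corollary: every finite-dimensional state begets a generalized NOON state that violates the GYNI inequality, since such an η yields GYNI value strictly greater than the one-way-signaling bound.) -/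
/-!
Let `λ_{p+1}` be the last nonzero amplitude of `λ` (it exists since the support is finite and
meets `ℕ \ {0}`). Then `η̃_k(n) = 0` as soon as `n + k > p + 1`, so a vector `η` supported on
`{p, p + 1}` only sees `η̃_0` among the even sequences and `η̃_1` among the odd ones. Choosing
`(η_p, η_{p+1})` to be the unit vector orthogonal to `(η̃_0(p), η̃_0(p+1))` in `ℂ²` kills the
even overlaps, while `η_p ≠ 0` because `η̃_0(p+1) ≠ 0`; as `η̃_1(p + 1) = 0` and `η̃_1(p) ≠ 0`,
the overlap with `η̃_1` is nonzero.
-/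

open scoped ComplexConjugate

open Function

/-- The sequence `η̃_k` of the paper: `splitAmplitude λ k n` is the amplitude of `|n⟩|k⟩` after
a balanced beam splitter acts on `∑ λ_N |N⟩|0⟩`. -/
noncomputable def splitAmplitude (lam : ℕ → ℂ) (k n : ℕ) : ℂ :=
  lam (n + k) * (((2 : ℝ) ^ (-((n + k : ℕ) : ℝ) / 2) : ℝ) : ℂ) *
    ((Real.sqrt (Nat.choose (n + k) k : ℝ) : ℝ) : ℂ)

theorem splitAmplitude_eq_zero_iff {lam : ℕ → ℂ} {k n : ℕ} :
    splitAmplitude lam k n = 0 ↔ lam (n + k) = 0 := by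
  have hpow : (0 : ℝ) < 2 ^ (-((n + k : ℕ) : ℝ) / 2) := Real.rpow_pos_of_pos two_pos _
  have hchoose : (0 : ℝ) < Real.sqrt (Nat.choose (n + k) k : ℝ) :=
    Real.sqrt_pos.2 (by exact_mod_cast Nat.choose_pos (Nat.le_add_left k n))
  simp only [splitAmplitude, mul_eq_zero, Complex.ofReal_eq_zero, hpow.ne', hchoose.ne', or_false]

theorem exists_last_ne_zero_of_finite_support {α : Type*} [Zero α] {f : ℕ → α}
    (hf : (support f).Finite) {m : ℕ} (hm : f m ≠ 0) :
    ∃ M, m ≤ M ∧ f M ≠ 0 ∧ ∀ n, M < n → f n = 0 := by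
  have hmax : ∀ n, f n ≠ 0 → n ≤ sSup (support f) := fun n hn => le_csSup hf.bddAbove hn
  refine ⟨sSup (support f), hmax m hm, Nat.sSup_mem ⟨m, hm⟩ hf.bddAbove, fun n hn => ?_⟩
  by_contra h
  exact hn.not_ge (hmax n h)

theorem exists_unit_pair_orthogonal (a : ℂ) {b : ℂ} (hb : b ≠ 0) :
    ∃ x y : ℂ, x ≠ 0 ∧ ‖x‖ ^ 2 + ‖y‖ ^ 2 = 1 ∧ conj x * a + conj y * b = 0 := by
  set r : ℝ := Real.sqrt (‖a‖ ^ 2 + ‖b‖ ^ 2)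
  have hr2 : r ^ 2 = ‖a‖ ^ 2 + ‖b‖ ^ 2 := Real.sq_sqrt (by positivity)
  have hr : 0 < r := Real.sqrt_pos.2 (by positivity)
  refine ⟨conj b / r, -conj a / r, div_ne_zero ((map_ne_zero _).2 hb) (by exact_mod_cast hr.ne'),
    ?_, ?_⟩
  · simp only [norm_div, norm_neg, Complex.norm_conj, Complex.norm_real, Real.norm_of_nonneg hr.le,
      div_pow, hr2]
    field_simp
    ring
  · simp only [map_div₀, map_neg, Complex.conj_conj, Complex.conj_ofReal]
    ring

section PairSupport

variable {β M : Type*} [AddCommMonoid M] [TopologicalSpace M]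

theorem tsum_eq_add_of_eq_zero_off_pair {f : β → M} {i j : β} (hij : i ≠ j)
    (hf : ∀ n, n ≠ i → n ≠ j → f n = 0) : ∑' n, f n = f i + f j := by
  classical
  rw [tsum_eq_sum (s := {i, j}) fun n hn => by simp_all, Finset.sum_pair hij]

variable [DecidableEq β] {i j : β}

theorem tsum_norm_sq_single_add_single (hij : i ≠ j) (x y : ℂ) :
    ∑' n, ‖(Pi.single i x + Pi.single j y : β → ℂ) n‖ ^ 2 = ‖x‖ ^ 2 + ‖y‖ ^ 2 := by
  rw [tsum_eq_add_of_eq_zero_off_pair hij fun n hi hj => by simp [hi, hj]]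
  simp [hij, hij.symm]

theorem tsum_conj_single_add_single_mul (hij : i ≠ j) (x y : ℂ) (f : β → ℂ) :
    ∑' n, conj ((Pi.single i x + Pi.single j y : β → ℂ) n) * f n =
      conj x * f i + conj y * f j := by
  rw [tsum_eq_add_of_eq_zero_off_pair hij fun n hi hj => by simp [hi, hj]]
  simp [hij, hij.symm]

end PairSupport

theorem finite_dimensional_state_gyni_violation_general
    (lam : ℕ → ℂ)
    (hfin : (Function.support lam).Finite)
    (hnc : ∃ m : ℕ, 1 ≤ m ∧ lam m ≠ 0)
    (eta : ℕ → ℕ → ℂ)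
    (heta : ∀ k n : ℕ, eta k n = lam (n + k) *
      (((2 : ℝ) ^ (-((n + k : ℕ) : ℝ) / 2) : ℝ) : ℂ) *
      ((Real.sqrt (Nat.choose (n + k) k : ℝ) : ℝ) : ℂ)) :
    ∃ η : ℕ → ℂ,
      (∑' n : ℕ, ‖η n‖ ^ 2 = 1) ∧
      (∀ k : ℕ, ∑' n : ℕ, (starRingEnd ℂ) (η n) * eta (2 * k) n = 0) ∧
      0 < ∑' k : ℕ, ‖∑' n : ℕ, (starRingEnd ℂ) (η n) * eta (2 * k + 1) n‖ ^ 2 := by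
  obtain rfl : eta = splitAmplitude lam := funext₂ heta
  obtain ⟨m, hm, hlam_m⟩ := hnc
  obtain ⟨M, hmM, hlamM, htop⟩ := exists_last_ne_zero_of_finite_support hfin hlam_m
  obtain ⟨p, rfl⟩ : ∃ p, M = p + 1 := ⟨M - 1, by omega⟩
  have hvanish : ∀ k n, p + 1 < n + k → splitAmplitude lam k n = 0 :=
    fun k n h => splitAmplitude_eq_zero_iff.2 (htop _ h)
  have hp : p ≠ p + 1 := by omega
  obtain ⟨x, y, hx, hxy, horth⟩ := exists_unit_pair_orthogonal (splitAmplitude lam 0 p)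
    ((splitAmplitude_eq_zero_iff (k := 0) (n := p + 1)).not.2 hlamM)
  refine ⟨Pi.single p x + Pi.single (p + 1) y, by rwa [tsum_norm_sq_single_add_single hp],
    fun k => ?_, ?_⟩
  · rw [tsum_conj_single_add_single_mul hp]
    rcases k.eq_zero_or_pos with rfl | hk
    · simpa using horth
    · simp [hvanish (2 * k) p (by omega), hvanish (2 * k) (p + 1) (by omega)]
  · have hodd : ∀ k ≠ 0, ‖∑' n, conj ((Pi.single p x + Pi.single (p + 1) y : ℕ → ℂ) n) *
        splitAmplitude lam (2 * k + 1) n‖ ^ 2 = 0 := fun k hk => by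
      rw [tsum_conj_single_add_single_mul hp, hvanish (2 * k + 1) p (by omega),
        hvanish (2 * k + 1) (p + 1) (by omega)]
      simp
    have hfirst : conj x * splitAmplitude lam 1 p ≠ 0 :=
      mul_ne_zero ((map_ne_zero _).2 hx) (splitAmplitude_eq_zero_iff.not.2 hlamM)
    rw [tsum_eq_single 0 hodd, tsum_conj_single_add_single_mul hp, hvanish 1 (p + 1) (by omega)]
    simpa using pow_pos (norm_pos_iff.2 hfirst) 2

/-- Core of the Corollary: for a normalized, finitely supported, non-classical
single-mode state (some `λ_m ≠ 0` with `m ≥ 1`), there is a normalized vector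
`η` orthogonal to all even annihilated sequences `η̃_{2k}` but with nonzero
total overlap with the odd ones, so the generalized NOON state violates GYNI. -/
theorem finite_dimensional_state_gyni_violation
    (lam : ℕ → ℂ)
    (hfin : (Function.support lam).Finite)
    (hnorm : ∑' n : ℕ, ‖lam n‖ ^ 2 = 1)
    (hnc : ∃ m : ℕ, 1 ≤ m ∧ lam m ≠ 0)
    (eta : ℕ → ℕ → ℂ)
    (heta : ∀ k n : ℕ, eta k n = lam (n + k) *
      (((2 : ℝ) ^ (-((n + k : ℕ) : ℝ) / 2) : ℝ) : ℂ) *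
      ((Real.sqrt (Nat.choose (n + k) k : ℝ) : ℝ) : ℂ)) :
    ∃ η : ℕ → ℂ,
      (∑' n : ℕ, ‖η n‖ ^ 2 = 1) ∧
      (∀ k : ℕ, ∑' n : ℕ, (starRingEnd ℂ) (η n) * eta (2 * k) n = 0) ∧
      0 < ∑' k : ℕ, ‖∑' n : ℕ, (starRingEnd ℂ) (η n) * eta (2 * k + 1) n‖ ^ 2 :=
  finite_dimensional_state_gyni_violation_general lam hfin hnc eta heta
end

section
/- Let λ : ℕ → ℂ satisfy Σ_n |λ_n|² = 1 and |λ_0| < 1. For each k ∈ ℕ define η̃_k : ℕ → ℂ by η̃_k(n) = λ_{n+k} · 2^{-(n+k)/2} · (Nat.choose (n+k) k)^{1/2}, and set 𝒩_{00} = 2(1+|λ_0|²), 𝒩_{01} = 2(1-|λ_0|²). Let η : ℕ → ℂ satisfy Σ_n |η_n|² = 1 and Σ_n conj(η_n)·η̃_{2k}(n) = 0 for all k ∈ ℕ. Then the GYNI value F := (4/𝒩_{00}) Σ_{k=0}^∞ (Σ_n |η̃_{2k}(n)|² − |Σ_n conj(η_n)·η̃_{2k}(n)|²) + (4/𝒩_{01})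 Σ_{k=0}^∞ |Σ_n conj(η_n)·η̃_{2k+1}(n)|² satisfies F = 1 + (4/𝒩_{01}) Σ_{k=0}^∞ |Σ_n conj(η_n)·η̃_{2k+1}(n)|² ≥ 1, with equality if and only if Σ_n conj(η_n)·η̃_{2k+1}(n) = 0 for every k. -/
/-!
`Σ_n |η̃_k(n)|² = Σ_m |λ_m|² C(m,k) / 2^m` is the binomial ½-thinning of the photon-number
distribution `|λ_m|²`, whose generating function is `Σ_k x^k ‖η̃_k‖² = Σ_m |λ_m|² ((1+x)/2)^m`.
At `x = ±1` this gives `Σ_k ‖η̃_k‖² = 1` and `Σ_k (-1)^k ‖η̃_k‖² = |λ_0|²`, so the even and odd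
weights sum to `(1 ± |λ_0|²)/2`. Orthogonality to the even `η̃_{2k}` makes the first term of `F`
exactly `(4/𝒩₀₀)(1 + |λ_0|²)/2 = 1`; Cauchy–Schwarz bounds the odd overlaps by the summable odd
weights, so the second term is a convergent series of nonnegative terms, zero iff each term is.
-/

open Finset

theorem hasSum_pow_mul_choose_div_two_pow (x : ℝ) (m : ℕ) :
    HasSum (fun k => x ^ k * (m.choose k / 2 ^ m)) (((1 + x) / 2) ^ m) := by
  have hvanish : ∀ k ∉ range (m + 1), x ^ k * (m.choose k / 2 ^ m : ℝ) = 0 := fun k hk => by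
    rw [Nat.choose_eq_zero_of_lt (by simpa using hk)]; simp
  rw [div_pow, add_comm, add_pow, sum_div]
  simp only [one_pow, mul_one, mul_div_assoc]
  exact hasSum_sum_of_ne_finset_zero hvanish

theorem tsum_eq_zero_iff_of_nonneg {ι : Type*} {f : ι → ℝ} (hf : Summable f)
    (hnn : ∀ i, 0 ≤ f i) : ∑' i, f i = 0 ↔ ∀ i, f i = 0 := by
  rw [← hf.hasSum_iff, hasSum_zero_iff_of_nonneg hnn, funext_iff]
  rfl

theorem summable_of_tsum_ne_zero {ι : Type*} {f : ι → ℝ} (h : ∑' i, f i ≠ 0) : Summable f := by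
  by_contra hf
  exact h (tsum_eq_zero_of_not_summable hf)

theorem one_le_and_eq_one_iff_of_eq_one_add_mul_tsum {ι : Type*} {s : ι → ℝ} (hs : Summable s)
    (hnn : ∀ i, 0 ≤ s i) {c F : ℝ} (hc : 0 < c) (hF : F = 1 + c * ∑' i, s i) :
    1 ≤ F ∧ (F = 1 ↔ ∀ i, s i = 0) := by
  rw [hF, add_eq_left, mul_eq_zero, or_iff_right hc.ne', tsum_eq_zero_iff_of_nonneg hs hnn]
  exact ⟨le_add_of_nonneg_right (mul_nonneg hc.le (tsum_nonneg hnn)), Iff.rfl⟩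

theorem two_mul_tsum_even_and_odd {f : ℕ → ℝ} (hf : Summable f) :
    2 * ∑' k, f (2 * k) = ∑' k, f k + ∑' k, (-1) ^ k * f k ∧
      2 * ∑' k, f (2 * k + 1) = ∑' k, f k - ∑' k, (-1) ^ k * f k := by
  have he : Summable fun k => f (2 * k) :=
    hf.comp_injective (mul_right_injective₀ two_ne_zero)
  have ho : Summable fun k => f (2 * k + 1) :=
    hf.comp_injective ((add_left_injective 1).comp (mul_right_injective₀ two_ne_zero))
  have hsplit := tsum_even_add_odd he ho
  have hsplit_sign := tsum_even_add_odd (f := fun k => (-1) ^ k * f k)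
    (by simpa [pow_mul] using he) (by simpa [pow_add, pow_mul] using ho.neg)
  simp only [pow_add, pow_mul, neg_one_sq, one_pow, pow_one, one_mul, neg_one_mul, tsum_neg]
    at hsplit_sign
  constructor <;> linarith

noncomputable def binomialThinning (a : ℕ → ℝ) (k : ℕ) : ℝ := ∑' m, a m * (m.choose k / 2 ^ m)

section binomialThinning

variable {a : ℕ → ℝ}

theorem summable_binomialThinning_uncurry (ha : 0 ≤ a) (hs : Summable a) :
    Summable fun p : ℕ × ℕ => a p.1 * (p.1.choose p.2 / 2 ^ p.1) := by
  have hfiber (m : ℕ) : HasSum (fun k => a m * (m.choose k / 2 ^ m)) (a m) := by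
    simpa using (hasSum_pow_mul_choose_div_two_pow 1 m).mul_left (a m)
  refine (summable_prod_of_nonneg fun p => mul_nonneg (ha p.1) (by positivity)).2
    ⟨fun m => (hfiber m).summable, ?_⟩
  simpa only [(hfiber _).tsum_eq] using hs

theorem hasSum_pow_mul_binomialThinning (ha : 0 ≤ a) (hs : Summable a) {x : ℝ} (hx : |x| ≤ 1) :
    HasSum (fun k => x ^ k * binomialThinning a k) (∑' m, a m * ((1 + x) / 2) ^ m) := by
  set g : ℕ × ℕ → ℝ := fun p => a p.1 * (x ^ p.2 * (p.1.choose p.2 / 2 ^ p.1))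
  have hbound := summable_binomialThinning_uncurry ha hs
  have hg : Summable g := hbound.of_norm_bounded fun p => by
    rw [Real.norm_eq_abs, abs_mul, abs_mul, abs_pow, abs_of_nonneg (ha p.1),
      abs_of_nonneg (by positivity : (0 : ℝ) ≤ p.1.choose p.2 / 2 ^ p.1)]
    exact mul_le_mul_of_nonneg_left
      (mul_le_of_le_one_left (by positivity) (pow_le_one₀ (abs_nonneg x) hx)) (ha p.1)
  have hcol (k : ℕ) : HasSum (fun m => g (m, k)) (x ^ k * binomialThinning a k) := by
    simp only [g, mul_left_comm (a _)]
    exact (hbound.prod_symm.prod_factor k).hasSum.mul_left (x ^ k)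
  have hrow (m : ℕ) : HasSum (fun k => g (m, k)) (a m * ((1 + x) / 2) ^ m) :=
    (hasSum_pow_mul_choose_div_two_pow x m).mul_left (a m)
  have htotal : ∑' p, g p = ∑' m, a m * ((1 + x) / 2) ^ m := by
    rw [hg.tsum_prod' fun m => (hrow m).summable]
    exact tsum_congr fun m => (hrow m).tsum_eq
  rw [← htotal, ← (Equiv.prodComm ℕ ℕ).tsum_eq]
  exact hg.prod_symm.hasSum.prod_fiberwise hcol

theorem hasSum_binomialThinning (ha : 0 ≤ a) (hs : Summable a) :
    HasSum (binomialThinning a) (∑' m, a m) := by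
  simpa using hasSum_pow_mul_binomialThinning ha hs (x := 1) (by simp)

theorem hasSum_neg_one_pow_mul_binomialThinning (ha : 0 ≤ a) (hs : Summable a) :
    HasSum (fun k => (-1) ^ k * binomialThinning a k) (a 0) := by
  convert hasSum_pow_mul_binomialThinning ha hs (x := -1) (by simp) using 1
  rw [tsum_eq_single 0 fun m hm => by simp [hm]]
  simp

theorem tsum_binomialThinning_two_mul (ha : 0 ≤ a) (hs : Summable a) :
    ∑' k, binomialThinning a (2 * k) = (∑' m, a m + a 0) / 2 := by
  have := (two_mul_tsum_even_and_odd (hasSum_binomialThinning ha hs).summable).1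
  rw [(hasSum_binomialThinning ha hs).tsum_eq,
    (hasSum_neg_one_pow_mul_binomialThinning ha hs).tsum_eq] at this
  linarith

theorem hasSum_binomialThinning_two_mul_add_one (ha : 0 ≤ a) (hs : Summable a) :
    HasSum (fun k => binomialThinning a (2 * k + 1)) ((∑' m, a m - a 0) / 2) := by
  have hodd : Summable fun k => binomialThinning a (2 * k + 1) :=
    (hasSum_binomialThinning ha hs).summable.comp_injective
      ((add_left_injective 1).comp (mul_right_injective₀ two_ne_zero))
  have := (two_mul_tsum_even_and_odd (hasSum_binomialThinning ha hs).summable).2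
  rw [(hasSum_binomialThinning ha hs).tsum_eq,
    (hasSum_neg_one_pow_mul_binomialThinning ha hs).tsum_eq] at this
  convert hodd.hasSum using 1
  linarith

theorem hasSum_binomialThinning_nat_add (ha : 0 ≤ a) (hs : Summable a) (k : ℕ) :
    HasSum (fun n => a (n + k) * ((n + k).choose k / 2 ^ (n + k))) (binomialThinning a k) := by
  have hfiber := (summable_binomialThinning_uncurry ha hs).prod_symm.prod_factor k
  refine ((add_left_injective k).hasSum_iff fun m hm => ?_).2 hfiber.hasSum
  have hmk : m < k := by
    by_contra! h
    exact hm ⟨m - k, Nat.sub_add_cancel h⟩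
  simp [Nat.choose_eq_zero_of_lt hmk]

end binomialThinning

theorem norm_tsum_conj_mul_sq_le {ι : Type*} {u v : ι → ℂ}
    (hu : Summable fun i => ‖u i‖ ^ 2) (hv : Summable fun i => ‖v i‖ ^ 2) :
    ‖∑' i, starRingEnd ℂ (u i) * v i‖ ^ 2 ≤ (∑' i, ‖u i‖ ^ 2) * ∑' i, ‖v i‖ ^ 2 := by
  have hp : (0 : ℝ) < (2 : ENNReal).toReal := by norm_num
  have mem {w : ι → ℂ} (hw : Summable fun i => ‖w i‖ ^ 2) : Memℓp w 2 :=
    memℓp_gen (by simpa using hw)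
  have norm_sq (w : lp (fun _ : ι => ℂ) 2) : ‖w‖ ^ 2 = ∑' i, ‖w i‖ ^ 2 := by
    simpa using lp.norm_rpow_eq_tsum hp w
  let U : lp (fun _ : ι => ℂ) 2 := ⟨u, mem hu⟩
  let V : lp (fun _ : ι => ℂ) 2 := ⟨v, mem hv⟩
  have hinner : inner ℂ U V = ∑' i, starRingEnd ℂ (u i) * v i := by
    rw [lp.inner_eq_tsum]
    exact tsum_congr fun i => by rw [RCLike.inner_apply']
  rw [← hinner, ← norm_sq U, ← norm_sq V, ← mul_pow]
  exact pow_le_pow_left₀ (norm_nonneg _) (norm_inner_le_norm U V) 2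

theorem norm_sq_mul_two_rpow_mul_sqrt (z : ℂ) (m : ℕ) (c : ℝ) (hc : 0 ≤ c) :
    ‖z * (((2 : ℝ) ^ (-(m : ℝ) / 2) : ℝ) : ℂ) * ((Real.sqrt c : ℝ) : ℂ)‖ ^ 2
      = ‖z‖ ^ 2 * (c / 2 ^ m) := by
  rw [norm_mul, norm_mul, Complex.norm_real, Complex.norm_real, Real.norm_of_nonneg (by positivity),
    Real.norm_of_nonneg (Real.sqrt_nonneg c), mul_pow, mul_pow, Real.sq_sqrt hc,
    ← Real.rpow_mul_natCast zero_le_two, show -(m : ℝ) / 2 * ((2 : ℕ) : ℝ) = -m by push_cast; ring,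
    Real.rpow_neg zero_le_two, Real.rpow_natCast]
  ring

/-- In the proof of Theorem 1: if Alice's projector vector `η` is orthogonal to
all even annihilated sequences `η̃_{2k}`, the GYNI value `F` equals
`1 + (4/𝒩₀₁)·Σ_k |⟨η, η̃_{2k+1}⟩|² ≥ 1`, with equality iff `η` is also
orthogonal to all odd sequences. -/
theorem gyni_value_formula
    (lam : ℕ → ℂ)
    (hnorm : ∑' n : ℕ, Norm.norm (lam n) ^ 2 = 1)
    (h0 : Norm.norm (lam 0) < 1)
    (eta : ℕ → ℕ → ℂ)
    (heta : ∀ k n : ℕ, eta k n = lam (n + k) *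
      (((2 : ℝ) ^ (-((n + k : ℕ) : ℝ) / 2) : ℝ) : ℂ) *
      ((Real.sqrt (Nat.choose (n + k) k : ℝ) : ℝ) : ℂ))
    (N00 N01 : ℝ)
    (hN00 : N00 = 2 * (1 + Norm.norm (lam 0) ^ 2))
    (hN01 : N01 = 2 * (1 - Norm.norm (lam 0) ^ 2))
    (η : ℕ → ℂ) (hη : ∑' n : ℕ, Norm.norm (η n) ^ 2 = 1)
    (horth : ∀ k : ℕ, ∑' n : ℕ, (starRingEnd ℂ) (η n) * eta (2 * k) n = 0)
    (F : ℝ)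
    (hF : F = (4 / N00) * (∑' k : ℕ,
        ((∑' n : ℕ, Norm.norm (eta (2 * k) n) ^ 2) -
          Norm.norm (∑' n : ℕ, (starRingEnd ℂ) (η n) * eta (2 * k) n) ^ 2)) +
      (4 / N01) * (∑' k : ℕ,
        Norm.norm (∑' n : ℕ, (starRingEnd ℂ) (η n) * eta (2 * k + 1) n) ^ 2)) :
    F = 1 + (4 / N01) * (∑' k : ℕ,
        Norm.norm (∑' n : ℕ, (starRingEnd ℂ) (η n) * eta (2 * k + 1) n) ^ 2) ∧
    1 ≤ F ∧
    (F = 1 ↔ ∀ k : ℕ, ∑' n : ℕ, (starRingEnd ℂ) (η n) * eta (2 * k + 1) n = 0) := by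
  set a : ℕ → ℝ := fun m => ‖lam m‖ ^ 2
  have ha : 0 ≤ a := fun m => by positivity
  have hs : Summable a := summable_of_tsum_ne_zero (by simp [a, hnorm])
  have hη_summable : Summable fun n => ‖η n‖ ^ 2 := summable_of_tsum_ne_zero (by simp [hη])
  have heta_hasSum (k : ℕ) : HasSum (fun n => ‖eta k n‖ ^ 2) (binomialThinning a k) := by
    simpa only [heta, norm_sq_mul_two_rpow_mul_sqrt _ _ _ (Nat.cast_nonneg _)]
      using hasSum_binomialThinning_nat_add ha hs k
  have hodd_le (k : ℕ) : ‖∑' n, starRingEnd ℂ (η n) * eta (2 * k + 1) n‖ ^ 2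
      ≤ binomialThinning a (2 * k + 1) := by
    simpa [hη, (heta_hasSum _).tsum_eq]
      using norm_tsum_conj_mul_sq_le hη_summable (heta_hasSum (2 * k + 1)).summable
  have hodd_summable : Summable fun k => ‖∑' n, starRingEnd ℂ (η n) * eta (2 * k + 1) n‖ ^ 2 :=
    (hasSum_binomialThinning_two_mul_add_one ha hs).summable.of_nonneg_of_le
      (fun _ => by positivity) hodd_le
  have heven : ∑' k, (∑' n, ‖eta (2 * k) n‖ ^ 2
      - ‖∑' n, starRingEnd ℂ (η n) * eta (2 * k) n‖ ^ 2) = (1 + a 0) / 2 := by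
    simp only [horth, norm_zero, ne_eq, OfNat.ofNat_ne_zero, not_false_eq_true, zero_pow,
      sub_zero, (heta_hasSum _).tsum_eq]
    rw [tsum_binomialThinning_two_mul ha hs, hnorm]
  have ha0 : a 0 < 1 := pow_lt_one₀ (norm_nonneg _) h0 two_ne_zero
  have hcoeff : 0 < 4 / N01 := by
    rw [hN01]
    exact div_pos four_pos (by change 0 < 2 * (1 - a 0); linarith)
  have hFeq : F = 1 + 4 / N01 * ∑' k, ‖∑' n, starRingEnd ℂ (η n) * eta (2 * k + 1) n‖ ^ 2 := by
    rw [hF, heven, hN00]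
    congr 1
    field_simp
    ring
  obtain ⟨hone_le, heq_one⟩ := one_le_and_eq_one_iff_of_eq_one_add_mul_tsum hodd_summable
    (fun _ => by positivity) hcoeff hFeq
  exact ⟨hFeq, hone_le, heq_one.trans (forall_congr' fun k => by simp)⟩
end

section
/- Let α ∈ ℂ, x = |α|², and define u : ℕ → ℂ by u_n = e^{-x/2}(α^n + (-α)^n)/√(n!) (the unnormalized even cat state coefficients), and Ψ : ℕ × ℕ → ℂ by Ψ(n,m) = u_n·[m=0] + [n=0]·u_m (the unnormalized even-coherent NOON state). Then the Bell correlator E := (4|Ψ(0,0)|² − 2·Σ_{m}|Ψ(0,m)|² − 2·Σ_{n}|Ψ(n,0)|² + Σ_{(n,m)}|Ψ(n,m)|²) / (Σ_{(n,m)}|Ψ(n,m)|²) equals (6e^{-x} − 1 − e^{-2x})/(1+e^{-x})². -/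
/-!
Write `Ψ = u ⊗ δ₀ + δ₀ ⊗ u`. Its squared amplitudes are those of `u` along the two axes, except
at the vacuum `(0,0)`, where the two branches interfere to `|2u₀|² = 4|u₀|²`. With
`S = Σ |uₙ|²` and `a = |u₀|²` this makes the correlator `(3a - S) / (S + a)`. For the even cat
state `|uₙ|² = e^{-x} (2xⁿ + 2(-x)ⁿ) / n!`, so the exponential series give `S = 2 + 2e^{-2x}`,
while `a = 4e^{-x}`.
-/

open scoped Nat

section

variable {α β γ : Type*} [AddCommMonoid α] [TopologicalSpace α]

theorem HasSum.ite_snd_eq [DecidableEq γ] {f : β → α} {a : α} (hf : HasSum f a) (c : γ) :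
    HasSum (fun p : β × γ => if p.2 = c then f p.1 else 0) a := by
  refine ((Prod.mk_left_injective c).hasSum_iff ?_).mp (by simpa [Function.comp_def] using hf)
  rintro ⟨b, c'⟩ hp
  rw [if_neg]
  rintro rfl
  exact hp ⟨b, rfl⟩

theorem HasSum.ite_fst_eq [DecidableEq β] {f : γ → α} {a : α} (hf : HasSum f a) (b : β) :
    HasSum (fun p : β × γ => if p.1 = b then f p.2 else 0) a := by
  refine ((Prod.mk_right_injective b).hasSum_iff ?_).mp (by simpa [Function.comp_def] using hf)
  rintro ⟨b', c⟩ hp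
  rw [if_neg]
  rintro rfl
  exact hp ⟨c, rfl⟩

end

namespace TwoMode

variable {𝕜 : Type*} [RCLike 𝕜]

def noonState (u : ℕ → 𝕜) (p : ℕ × ℕ) : 𝕜 :=
  u p.1 * (if p.2 = 0 then 1 else 0) + (if p.1 = 0 then 1 else 0) * u p.2

-- `⟨M₀ ⊗ M₀⟩` with `M₀ = 2|0⟩⟨0| - 1`, in the state whose unnormalized Fock amplitudes are `Ψ`.
noncomputable def vacuumCorrelator (Ψ : ℕ × ℕ → 𝕜) : ℝ :=
  (4 * ‖Ψ (0, 0)‖ ^ 2 - 2 * ∑' m : ℕ, ‖Ψ (0, m)‖ ^ 2 - 2 * ∑' n : ℕ, ‖Ψ (n, 0)‖ ^ 2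
    + ∑' p : ℕ × ℕ, ‖Ψ p‖ ^ 2) / ∑' p : ℕ × ℕ, ‖Ψ p‖ ^ 2

theorem noonState_zero_zero (u : ℕ → 𝕜) : noonState u (0, 0) = 2 * u 0 := by
  simp [noonState, two_mul]

theorem norm_sq_noonState (u : ℕ → 𝕜) (p : ℕ × ℕ) :
    ‖noonState u p‖ ^ 2 = (if p.2 = 0 then ‖u p.1‖ ^ 2 else 0)
      + (if p.1 = 0 then ‖u p.2‖ ^ 2 else 0) + (if p = (0, 0) then 2 * ‖u 0‖ ^ 2 else 0) := by
  obtain ⟨n, m⟩ := p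
  rcases eq_or_ne n 0 with rfl | hn <;> rcases eq_or_ne m 0 with rfl | hm
  · rw [noonState_zero_zero, norm_mul, RCLike.norm_two]
    simp only [if_true]
    ring
  all_goals simp [noonState, *]

variable {u : ℕ → 𝕜} {S : ℝ}

theorem hasSum_norm_sq_noonState_zero_left (hu : HasSum (fun n => ‖u n‖ ^ 2) S) :
    HasSum (fun m => ‖noonState u (0, m)‖ ^ 2) (S + 3 * ‖u 0‖ ^ 2) := by
  have h := ((hasSum_ite_eq 0 (‖u 0‖ ^ 2)).add hu).add (hasSum_ite_eq 0 (2 * ‖u 0‖ ^ 2))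
  convert h using 1
  · ext m
    simp [norm_sq_noonState]
  · ring

theorem hasSum_norm_sq_noonState_zero_right (hu : HasSum (fun n => ‖u n‖ ^ 2) S) :
    HasSum (fun n => ‖noonState u (n, 0)‖ ^ 2) (S + 3 * ‖u 0‖ ^ 2) := by
  have h := (hu.add (hasSum_ite_eq 0 (‖u 0‖ ^ 2))).add (hasSum_ite_eq 0 (2 * ‖u 0‖ ^ 2))
  convert h using 1
  · ext n
    simp [norm_sq_noonState]
  · ring

theorem hasSum_norm_sq_noonState (hu : HasSum (fun n => ‖u n‖ ^ 2) S) :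
    HasSum (fun p => ‖noonState u p‖ ^ 2) (2 * S + 2 * ‖u 0‖ ^ 2) := by
  have h := ((hu.ite_snd_eq 0).add (hu.ite_fst_eq 0)).add
    (hasSum_ite_eq ((0, 0) : ℕ × ℕ) (2 * ‖u 0‖ ^ 2))
  convert h using 1
  · exact funext (norm_sq_noonState u)
  · ring

theorem vacuumCorrelator_noonState (hu : HasSum (fun n => ‖u n‖ ^ 2) S) :
    vacuumCorrelator (noonState u) = (3 * ‖u 0‖ ^ 2 - S) / (S + ‖u 0‖ ^ 2) := by
  rw [vacuumCorrelator, (hasSum_norm_sq_noonState_zero_left hu).tsum_eq,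
    (hasSum_norm_sq_noonState_zero_right hu).tsum_eq, (hasSum_norm_sq_noonState hu).tsum_eq,
    noonState_zero_zero, norm_mul, RCLike.norm_two,
    ← mul_div_mul_left (3 * ‖u 0‖ ^ 2 - S) (S + ‖u 0‖ ^ 2) two_ne_zero]
  ring

end TwoMode

theorem RCLike.norm_pow_add_neg_pow_sq {𝕜 : Type*} [RCLike 𝕜] (z : 𝕜) (n : ℕ) :
    ‖z ^ n + (-z) ^ n‖ ^ 2 = 2 * (‖z‖ ^ 2) ^ n + 2 * (-‖z‖ ^ 2) ^ n := by
  rcases n.even_or_odd with hn | hn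
  · rw [hn.neg_pow, hn.neg_pow, ← two_mul, norm_mul, norm_pow, RCLike.norm_two, ← pow_mul,
      mul_comm 2 n, pow_mul]
    ring
  · rw [hn.neg_pow, hn.neg_pow, add_neg_cancel, norm_zero]
    ring

-- `⟨n|α⟩ + ⟨n|-α⟩`, the amplitudes of the unnormalized even coherent state `|α⟩ + |-α⟩`.
noncomputable def evenCat (α : ℂ) (n : ℕ) : ℂ :=
  ((Real.exp (-‖α‖ ^ 2 / 2) : ℝ) : ℂ) * (α ^ n + (-α) ^ n) / ((Real.sqrt n ! : ℝ) : ℂ)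

theorem norm_sq_evenCat (α : ℂ) (n : ℕ) :
    ‖evenCat α n‖ ^ 2 = Real.exp (-‖α‖ ^ 2) *
      (2 * ((‖α‖ ^ 2) ^ n / n !) + 2 * ((-‖α‖ ^ 2) ^ n / n !)) := by
  have hexp : Real.exp (-‖α‖ ^ 2 / 2) ^ 2 = Real.exp (-‖α‖ ^ 2) := by
    rw [← Real.exp_nat_mul]; ring_nf
  rw [evenCat, norm_div, norm_mul, Complex.norm_of_nonneg (Real.exp_pos _).le,
    Complex.norm_of_nonneg (Real.sqrt_nonneg _), div_pow, mul_pow, hexp,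
    RCLike.norm_pow_add_neg_pow_sq, Real.sq_sqrt (Nat.cast_nonneg _)]
  ring

theorem hasSum_norm_sq_evenCat (α : ℂ) :
    HasSum (fun n => ‖evenCat α n‖ ^ 2) (2 + 2 * Real.exp (-2 * ‖α‖ ^ 2)) := by
  have hexp (y : ℝ) : HasSum (fun n => y ^ n / n !) (Real.exp y) := by
    rw [Real.exp_eq_exp_ℝ]
    exact NormedSpace.expSeries_div_hasSum_exp y
  have hval : 2 + 2 * Real.exp (-2 * ‖α‖ ^ 2) =
      Real.exp (-‖α‖ ^ 2) * (2 * Real.exp (‖α‖ ^ 2) + 2 * Real.exp (-‖α‖ ^ 2)) := by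
    rw [mul_add, mul_left_comm, ← Real.exp_add, neg_add_cancel, Real.exp_zero, mul_left_comm,
      ← Real.exp_add]
    ring_nf
  rw [funext (norm_sq_evenCat α), hval]
  exact (((hexp _).mul_left 2).add ((hexp _).mul_left 2)).mul_left _

theorem norm_sq_evenCat_zero (α : ℂ) : ‖evenCat α 0‖ ^ 2 = 4 * Real.exp (-‖α‖ ^ 2) := by
  rw [norm_sq_evenCat]
  norm_num
  ring

open TwoMode in
/-- The reference-frame-independent Bell correlator `⟨M₀ᴬ M₀ᴮ⟩` of the
even-coherent NOON state equals `N[6e^{-x} − (1 + e^{-2x})]` with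
`N = 1/(1+e^{-x})²`, `x = |α|²`. -/
theorem even_coherent_NOON_bell_correlator
    (α : ℂ) (x : ℝ) (hx : x = ‖α‖ ^ 2)
    (u : ℕ → ℂ)
    (hu : ∀ n : ℕ, u n = ((Real.exp (-x / 2) : ℝ) : ℂ) * (α ^ n + (-α) ^ n) /
      ((Real.sqrt (Nat.factorial n) : ℝ) : ℂ))
    (Ψ : ℕ × ℕ → ℂ)
    (hΨ : ∀ n m : ℕ, Ψ (n, m) =
      u n * (if m = 0 then 1 else 0) + (if n = 0 then 1 else 0) * u m)
    (E : ℝ)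
    (hE : E = (4 * ‖Ψ (0, 0)‖ ^ 2
        - 2 * ∑' m : ℕ, ‖Ψ (0, m)‖ ^ 2
        - 2 * ∑' n : ℕ, ‖Ψ (n, 0)‖ ^ 2
        + ∑' p : ℕ × ℕ, ‖Ψ p‖ ^ 2) /
      ∑' p : ℕ × ℕ, ‖Ψ p‖ ^ 2) :
    E = (6 * Real.exp (-x) - 1 - Real.exp (-2 * x)) / (1 + Real.exp (-x)) ^ 2 := by
  subst hx
  obtain rfl : u = evenCat α := funext hu
  obtain rfl : Ψ = noonState (evenCat α) := funext fun p => hΨ p.1 p.2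
  have hE' : E = vacuumCorrelator (noonState (evenCat α)) := hE
  have hsq : Real.exp (-2 * ‖α‖ ^ 2) = Real.exp (-‖α‖ ^ 2) ^ 2 := by
    rw [← Real.exp_nat_mul]; ring_nf
  rw [hE', vacuumCorrelator_noonState (hasSum_norm_sq_evenCat α), norm_sq_evenCat_zero, hsq]
  field_simp
  ring
end

section
/- Let α ∈ ℂ, x = |α|², and define v : ℕ → ℂ by v_0 = 0 and v_n = e^{-x/2} √n · α^{n-1}/√((n-1)!) for n ≥ 1 (the unnormalized photon-added coherent state â†|α⟩), and Ψ : ℕ × ℕ → ℂ by Ψ(n,m) = v_n·[m=0] + [n=0]·v_m (the unnormalized photon-added coherent NOON state). Then the Bell correlator E := (4|Ψ(0,0)|² − 2·Σ_{m}|Ψ(0,m)|² − 2·Σ_{n}|Ψ(n,0)|² + Σ_{(n,m)}|Ψ(n,m)|²) / (Σ_{(n,m)}|Ψ(n,m)|²) equals −1, for every α ∈ ℂ. -/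
/-!
The NOON amplitude `Ψ` lives on the two coordinate axes of `ℕ × ℕ` and vanishes at the origin,
so with `N = ∑ |vₙ|²` both marginal sums equal `N` and the total sum is `2N`; the correlator is
then `(0 - 2N - 2N + 2N) / 2N = -1`. The only analytic input is `0 < N < ∞`, which follows from
`|vₙ₊₁|² = e^{-x} (n + 1) |α|^{2n} / n! ≤ e^{-x} (2|α|²)ⁿ / n!`.
-/

section AxisSums

variable {ι M : Type*} [AddCommMonoid M] [TopologicalSpace M]

theorem hasSum_ite_snd_eq [DecidableEq ι] {β : Type*} {f : β → M} {a : M} (b : ι)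
    (hf : HasSum f a) : HasSum (fun p : β × ι => if p.2 = b then f p.1 else 0) a := by
  have hinj : Function.Injective (fun c : β => (c, b)) := fun _ _ h => (Prod.mk.inj h).1
  refine (hinj.hasSum_iff ?_).mp ?_
  · rintro ⟨c, d⟩ hcd
    split_ifs with hd
    · exact absurd ⟨c, by rw [← hd]⟩ hcd
    · rfl
  · simpa [Function.comp_def] using hf

theorem hasSum_ite_fst_eq [DecidableEq ι] {β : Type*} {f : β → M} {a : M} (b : ι)
    (hf : HasSum f a) : HasSum (fun p : ι × β => if p.1 = b then f p.2 else 0) a :=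
  (Equiv.prodComm ι β).hasSum_iff.mpr (hasSum_ite_snd_eq b hf)

theorem hasSum_ite_axes [ContinuousAdd M] {g : ℕ → M} {a : M} (hg0 : g 0 = 0)
    (hg : HasSum g a) :
    HasSum (fun p : ℕ × ℕ => if p.2 = 0 then g p.1 else if p.1 = 0 then g p.2 else 0)
      (a + a) := by
  convert (hasSum_ite_snd_eq 0 hg).add (hasSum_ite_fst_eq 0 hg) using 1
  funext ⟨n, m⟩
  rcases eq_or_ne m 0 with rfl | hm <;> rcases eq_or_ne n 0 with rfl | hn <;> simp [*]

end AxisSums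

theorem noon_eq_ite {R : Type*} [NonAssocSemiring R] {v : ℕ → R} (hv0 : v 0 = 0) (n m : ℕ) :
    v n * (if m = 0 then 1 else 0) + (if n = 0 then 1 else 0) * v m =
      if m = 0 then v n else if n = 0 then v m else 0 := by
  rcases eq_or_ne m 0 with rfl | hm <;> rcases eq_or_ne n 0 with rfl | hn <;> simp [*]

/-- At `n = 0` the formula gives `0` because `√0 = 0`, so it describes `v` on all of `ℕ`. -/
noncomputable def photonAddedCoherent (x : ℝ) (α : ℂ) (n : ℕ) : ℂ :=
  ((Real.exp (-x / 2) : ℝ) : ℂ) * ((Real.sqrt n : ℝ) : ℂ) * α ^ (n - 1) /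
    ((Real.sqrt (Nat.factorial (n - 1)) : ℝ) : ℂ)

namespace photonAddedCoherent

variable (x : ℝ) (α : ℂ)

@[simp]
theorem zero : photonAddedCoherent x α 0 = 0 := by
  simp [photonAddedCoherent]

theorem norm_sq_succ (n : ℕ) :
    ‖photonAddedCoherent x α (n + 1)‖ ^ 2 =
      Real.exp (-x) * ((n + 1) * (‖α‖ ^ 2) ^ n / n.factorial) := by
  have hexp : Real.exp (-x / 2) ^ 2 = Real.exp (-x) := by
    rw [← Real.exp_nat_mul]; ring_nf
  simp only [photonAddedCoherent, Nat.add_sub_cancel, norm_div, norm_mul, norm_pow,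
    Complex.norm_real, Real.norm_eq_abs, abs_of_nonneg (Real.exp_pos _).le,
    abs_of_nonneg (Real.sqrt_nonneg _), div_pow, mul_pow, hexp,
    Real.sq_sqrt (Nat.cast_nonneg _), ← pow_mul]
  push_cast
  ring

theorem summable_norm_sq : Summable fun n => ‖photonAddedCoherent x α n‖ ^ 2 := by
  rw [← summable_nat_add_iff 1]
  refine .of_nonneg_of_le (fun n => by positivity) (fun n => ?_)
    ((Real.summable_pow_div_factorial (2 * ‖α‖ ^ 2)).mul_left (Real.exp (-x)))
  rw [norm_sq_succ, mul_pow]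
  gcongr
  exact_mod_cast n.lt_two_pow_self

theorem tsum_norm_sq_pos : 0 < ∑' n, ‖photonAddedCoherent x α n‖ ^ 2 := by
  refine (summable_norm_sq x α).tsum_pos (fun n => by positivity) 1 ?_
  rw [← zero_add 1, norm_sq_succ]
  positivity

end photonAddedCoherent

theorem photon_added_coherent_NOON_bell_correlator_general
    (α : ℂ) (x : ℝ)
    (v : ℕ → ℂ) (hv0 : v 0 = 0)
    (hv : ∀ n : ℕ, 1 ≤ n → v n =
      ((Real.exp (-x / 2) : ℝ) : ℂ) * ((Real.sqrt n : ℝ) : ℂ) * α ^ (n - 1) /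
        ((Real.sqrt (Nat.factorial (n - 1)) : ℝ) : ℂ))
    (Ψ : ℕ × ℕ → ℂ)
    (hΨ : ∀ n m : ℕ, Ψ (n, m) =
      v n * (if m = 0 then 1 else 0) + (if n = 0 then 1 else 0) * v m)
    (E : ℝ)
    (hE : E = (4 * ‖Ψ (0, 0)‖ ^ 2
        - 2 * ∑' m : ℕ, ‖Ψ (0, m)‖ ^ 2
        - 2 * ∑' n : ℕ, ‖Ψ (n, 0)‖ ^ 2
        + ∑' p : ℕ × ℕ, ‖Ψ p‖ ^ 2) /
      ∑' p : ℕ × ℕ, ‖Ψ p‖ ^ 2) :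
    E = -1 := by
  have hv_eq : v = photonAddedCoherent x α := by
    funext n
    rcases Nat.eq_zero_or_pos n with rfl | hn
    · simp [hv0]
    · exact hv n hn
  have hsum : Summable fun n => ‖v n‖ ^ 2 := hv_eq ▸ photonAddedCoherent.summable_norm_sq x α
  have hpos : 0 < ∑' n, ‖v n‖ ^ 2 := hv_eq ▸ photonAddedCoherent.tsum_norm_sq_pos x α
  have hΨ_eq (p : ℕ × ℕ) : Ψ p = if p.2 = 0 then v p.1 else if p.1 = 0 then v p.2 else 0 :=
    (hΨ p.1 p.2).trans (noon_eq_ite hv0 p.1 p.2)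
  have hrow : ∑' m, ‖Ψ (0, m)‖ ^ 2 = ∑' n, ‖v n‖ ^ 2 :=
    tsum_congr fun m => by rw [hΨ_eq]; split_ifs <;> simp_all
  have hcol : ∑' n, ‖Ψ (n, 0)‖ ^ 2 = ∑' n, ‖v n‖ ^ 2 := by simp [hΨ_eq]
  have htotal : ∑' p, ‖Ψ p‖ ^ 2 = ∑' n, ‖v n‖ ^ 2 + ∑' n, ‖v n‖ ^ 2 := by
    refine HasSum.tsum_eq ?_
    convert hasSum_ite_axes (by simp [hv0]) hsum.hasSum using 2 with p
    simp only [hΨ_eq]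
    split_ifs <;> simp
  have hΨ00 : Ψ (0, 0) = 0 := by simp [hΨ_eq, hv0]
  rw [hE, hΨ00, hrow, hcol, htotal, norm_zero]
  field_simp
  ring

/-- The reference-frame-independent Bell correlator `⟨M₀ᴬ M₀ᴮ⟩` of the
photon-added coherent NOON state equals `−1` for every amplitude `α`. -/
theorem photon_added_coherent_NOON_bell_correlator
    (α : ℂ) (x : ℝ) (hx : x = ‖α‖ ^ 2)
    (v : ℕ → ℂ) (hv0 : v 0 = 0)
    (hv : ∀ n : ℕ, 1 ≤ n → v n =
      ((Real.exp (-x / 2) : ℝ) : ℂ) * ((Real.sqrt n : ℝ) : ℂ) * α ^ (n - 1) /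
        ((Real.sqrt (Nat.factorial (n - 1)) : ℝ) : ℂ))
    (Ψ : ℕ × ℕ → ℂ)
    (hΨ : ∀ n m : ℕ, Ψ (n, m) =
      v n * (if m = 0 then 1 else 0) + (if n = 0 then 1 else 0) * v m)
    (E : ℝ)
    (hE : E = (4 * ‖Ψ (0, 0)‖ ^ 2
        - 2 * ∑' m : ℕ, ‖Ψ (0, m)‖ ^ 2
        - 2 * ∑' n : ℕ, ‖Ψ (n, 0)‖ ^ 2
        + ∑' p : ℕ × ℕ, ‖Ψ p‖ ^ 2) /
      ∑' p : ℕ × ℕ, ‖Ψ p‖ ^ 2) :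
    E = -1 :=
  photon_added_coherent_NOON_bell_correlator_general α x v hv0 hv Ψ hΨ E hE
end

section
/- Let 0 ≤ λ < 1 and φ ∈ ℝ. Define vectors w₀₀ = (1/√(2(1+λ)))·(2√λ, e^{iφ}√(2(1−λ)), 0) and w₀₁ = (0, 0, e^{iφ}) in ℂ³ (coordinates indexed by the Fock basis states |00⟩, |10⟩, |01⟩). Then (i) ‖w₀₀‖ = ‖w₀₁‖ = 1, and (ii) the GYNI value 𝒥₁ := (1/4)[2·|(w₀₀)₂|² + 2·|(w₀₁)₃|²] satisfies 𝒥₁ = (1/4)·(2·((2(1−λ))/(2(1+λ))) + 2·1) = 1/(1+λ), and 1/(1+λ) > 1/2. Hence the generalized NOON state built from |ψ₁⟩ = √λ|0⟩ + e^{iφ}√(1−λ)|1⟩ violates the GYNI inequality 𝒥 ≤ 1/2 for every λ ∈ [0,1), with maximal violation 𝒥₁ = 1 exactly at λ = 0. -/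
open scoped BigOperators

/-- The generalized NOON state built from `|ψ₁⟩ = √λ|0⟩ + e^{iφ}√(1−λ)|1⟩`
violates the GYNI inequality `𝒥 ≤ 1/2` for every `λ ∈ [0,1)`: the two output
vectors are normalized, the GYNI value is `𝒥₁ = 1/(1+λ) > 1/2`, and `𝒥₁ = 1`
(maximal violation) holds exactly at `λ = 0`. -/
theorem qubit_NOON_gyni_violation
    (lam : ℝ) (hlam0 : 0 ≤ lam) (hlam1 : lam < 1) (φ : ℝ)
    (w00 w01 : EuclideanSpace ℂ (Fin 3))
    (hw00 : w00 = ((1 / Real.sqrt (2 * (1 + lam)) : ℝ) : ℂ) •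
      (WithLp.equiv 2 (Fin 3 → ℂ)).symm
        ![((2 * Real.sqrt lam : ℝ) : ℂ),
          Complex.exp (φ * Complex.I) * ((Real.sqrt (2 * (1 - lam)) : ℝ) : ℂ), 0])
    (hw01 : w01 = (WithLp.equiv 2 (Fin 3 → ℂ)).symm
      ![0, 0, Complex.exp (φ * Complex.I)]) :
    ‖w00‖ = 1 ∧ ‖w01‖ = 1 ∧
    (1 / 4 : ℝ) * (2 * ‖w00 1‖ ^ 2 + 2 * ‖w01 2‖ ^ 2)
      = 1 / (1 + lam) ∧
    1 / (1 + lam) > 1 / 2 ∧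
    ((1 / 4 : ℝ) * (2 * ‖w00 1‖ ^ 2 + 2 * ‖w01 2‖ ^ 2) = 1
      ↔ lam = 0) := by
  have h1 : (0:ℝ) < 1 + lam := by linarith
  have hexp : ‖Complex.exp (φ * Complex.I)‖ = 1 :=
    Complex.norm_exp_ofReal_mul_I φ
  have hc00 : ‖w00 1‖ ^ 2 = (1 - lam) / (1 + lam) := by
    simp [hw00, WithLp.equiv_symm_apply, PiLp.toLp_apply, map_mul, Complex.norm_real, hexp]
    rw [abs_of_nonneg (Real.sqrt_nonneg _), abs_of_nonneg (Real.sqrt_nonneg _),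
      abs_of_nonneg (Real.sqrt_nonneg _)]
    have h2 : (Real.sqrt 2) ≠ 0 := by positivity
    have hp : (Real.sqrt (1 + lam)) ≠ 0 := by positivity
    field_simp
    ring_nf
    rw [Real.sq_sqrt (by linarith : (0:ℝ) ≤ 1 - lam),
      Real.sq_sqrt (by linarith : (0:ℝ) ≤ 1 + lam)]
    ring
  have hc01 : ‖w01 2‖ ^ 2 = 1 := by
    simp [hw01, WithLp.equiv_symm_apply, PiLp.toLp_apply, hexp]
  have hJ : (1 / 4 : ℝ) * (2 * ‖w00 1‖ ^ 2 + 2 * ‖w01 2‖ ^ 2)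
      = 1 / (1 + lam) := by
    rw [hc00, hc01]
    field_simp
    ring
  have hn00 : ‖w00‖ = 1 := by
    rw [hw00, norm_smul]
    rw [EuclideanSpace.norm_eq]
    simp [WithLp.equiv_symm_apply, PiLp.toLp_apply, Fin.sum_univ_three, hexp,
      map_mul, Complex.norm_real,
      abs_of_nonneg (Real.sqrt_nonneg _)]
    have e1 : (2 * Real.sqrt lam) ^ 2 + (Real.sqrt 2 * Real.sqrt (1 - lam)) ^ 2
        = 2 * (1 + lam) := by
      rw [mul_pow, mul_pow, Real.sq_sqrt hlam0,
        Real.sq_sqrt (by norm_num : (0:ℝ) ≤ 2),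
        Real.sq_sqrt (by linarith : (0:ℝ) ≤ 1 - lam)]
      ring
    have hp2 : (Real.sqrt 2) ≠ 0 := by positivity
    have hp : (Real.sqrt (1 + lam)) ≠ 0 := by positivity
    rw [e1, Real.sqrt_mul (by norm_num : (0:ℝ) ≤ 2)]
    field_simp
  have hn01 : ‖w01‖ = 1 := by
    rw [hw01, EuclideanSpace.norm_eq]
    simp [WithLp.equiv_symm_apply, PiLp.toLp_apply, Fin.sum_univ_three, hexp]
  refine ⟨hn00, hn01, hJ, ?_, ?_⟩
  · rw [gt_iff_lt, div_lt_div_iff₀ (by norm_num) h1]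
    linarith
  · rw [hJ]
    constructor
    · intro h
      rw [div_eq_one_iff_eq (ne_of_gt h1)] at h
      linarith
    · intro h
      rw [h]
      norm_num
end
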